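/- arXiv:2206.05669 — 6 statements merged into one kernel-verified Lean document; each statement's English description precedes it below -/
import Mathlib

section
/- Let μ be a symmetric probability distribution on ℝ with finite second moment M₂ = ∫ x² dμ(x). Let (w, b) ∈ ℝ^m × ℝ be a random vector whose m+1 coordinates are i.i.d. with law μ. Then for every x ∈ ℝ^m, E[w · σ(w · x + b)] = (M₂/2) x, where σ is the ReLU function applied to the scalar w · x + b. -/
open MeasureTheory

-- marginal of pi measure under eval
lemma aux_eval_map {m : ℕ} (μ : Measure ℝ) [IsProbabilityMeasure μ] (j : Fin m) :
    (Measure.pi fun _ : Fin m => μ).map (fun w => w j) = μ := by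
  ext s hs
  rw [Measure.map_apply (measurable_pi_apply j) hs]
  have : (fun w : Fin m → ℝ => w j) ⁻¹' s
      = Set.pi Set.univ (Function.update (fun _ => Set.univ) j s) := by
    ext w
    simp [Function.update_apply]
  rw [this, Measure.pi_pi]
  simp [Function.update_apply, apply_ite μ, measure_univ, Finset.prod_ite_eq']

-- pi product integral with general measure
lemma aux_pi_prod {m : ℕ} (μ : Measure ℝ) [IsProbabilityMeasure μ] (g : Fin m → ℝ → ℝ) :
    ∫ w : Fin m → ℝ, ∏ k, g k (w k) ∂(Measure.pi fun _ : Fin m => μ)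
      = ∏ k, ∫ t, g k t ∂μ := by
  letI : MeasureSpace ℝ := ⟨μ⟩
  exact MeasureTheory.integral_fintype_prod_eq_prod g

lemma aux_mean_zero (μ : Measure ℝ) [IsProbabilityMeasure μ]
    (hsymm : μ.map (fun x => -x) = μ) (hint : Integrable (fun x : ℝ => x ^ 2) μ) :
    ∫ t, t ∂μ = 0 := by
  have h1 : Integrable (fun t : ℝ => t) μ := by
    refine (hint.add (integrable_const 1)).mono ?_ ?_
    · exact aestronglyMeasurable_id
    · filter_upwards with t
      have : |t| ≤ t ^ 2 + 1 := by nlinarith [sq_nonneg (|t| - 1), abs_nonneg t, sq_abs t]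
      simpa [abs_of_nonneg (by positivity : (0:ℝ) ≤ t^2+1)] using this
  have h2 : ∫ t, t ∂μ = ∫ t, -t ∂μ := by
    conv_lhs => rw [← hsymm]
    exact integral_map measurable_neg.aemeasurable aestronglyMeasurable_id
  rw [integral_neg] at h2
  linarith

theorem relu_moment_identity_vector {m : ℕ} (μ : Measure ℝ) [IsProbabilityMeasure μ]
    (hsymm : μ.map (fun x => -x) = μ)
    (M₂ : ℝ) (hM : ∫ x, x ^ 2 ∂μ = M₂)
    (hint : Integrable (fun x : ℝ => x ^ 2) μ)
    (x : Fin m → ℝ) :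
    ∫ ω : (Fin m → ℝ) × ℝ,
        (max ((∑ i, ω.1 i * x i) + ω.2) 0) • ω.1
        ∂((Measure.pi fun _ : Fin m => μ).prod μ)
      = (M₂ / 2) • x := by
  set π : Measure (Fin m → ℝ) := Measure.pi fun _ : Fin m => μ with hπ
  set ν : Measure ((Fin m → ℝ) × ℝ) := π.prod μ with hν
  set S : (Fin m → ℝ) × ℝ → ℝ := fun ω => (∑ i, ω.1 i * x i) + ω.2 with hS
  have hfst : ν.map Prod.fst = π := by simp [hν]
  have hsnd : ν.map Prod.snd = μ := by simp [hν]
  have hμneg : MeasurePreserving (fun t : ℝ => -t) μ μ := ⟨measurable_neg, hsymm⟩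
  have hπneg : MeasurePreserving (fun w : Fin m → ℝ => -w) π π :=
    measurePreserving_pi (fun _ : Fin m => μ) (fun _ => μ) (fun _ => hμneg)
  have hνneg : MeasurePreserving (fun ω : (Fin m → ℝ) × ℝ => -ω) ν ν := hπneg.prod hμneg
  have hemb : MeasurableEmbedding (fun ω : (Fin m → ℝ) × ℝ => -ω) :=
    (MeasurableEquiv.neg ((Fin m → ℝ) × ℝ)).measurableEmbedding
  have hej : ∀ j : Fin m, ν.map (fun ω => ω.1 j) = μ := by
    intro j
    have h : ν.map (fun ω => ω.1 j) = (ν.map Prod.fst).map (fun w => w j) := by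
      rw [Measure.map_map (measurable_pi_apply j) measurable_fst]; rfl
    rw [h, hfst, hπ, aux_eval_map]
  -- integrability of coordinate products
  have iA : ∀ j : Fin m, Integrable (fun ω : (Fin m → ℝ) × ℝ => (ω.1 j) ^ 2) ν := by
    intro j
    have hm : AEMeasurable (fun ω : (Fin m → ℝ) × ℝ => ω.1 j) ν :=
      ((measurable_pi_apply j).comp measurable_fst).aemeasurable
    have h1 : Integrable ((fun t : ℝ => t ^ 2) ∘ (fun ω : (Fin m → ℝ) × ℝ => ω.1 j)) ν := by
      rw [← integrable_map_measure ?_ hm]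
      · rw [hej j]; exact hint
      · rw [hej j]; exact (measurable_id.pow_const 2).aestronglyMeasurable
    exact h1
  have iB : Integrable (fun ω : (Fin m → ℝ) × ℝ => ω.2 ^ 2) ν := by
    have hm : AEMeasurable (Prod.snd : (Fin m → ℝ) × ℝ → ℝ) ν := measurable_snd.aemeasurable
    have h1 : Integrable ((fun t : ℝ => t ^ 2) ∘ Prod.snd) ν := by
      rw [← integrable_map_measure ?_ hm]
      · rw [hsnd]; exact hint
      · rw [hsnd]; exact (measurable_id.pow_const 2).aestronglyMeasurable
    exact h1
  have iC : ∀ j i : Fin m, Integrable (fun ω : (Fin m → ℝ) × ℝ => ω.1 j * ω.1 i) ν := by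
    intro j i
    refine Integrable.mono' (((iA j).add (iA i)).const_mul (1/2)) ?_ ?_
    · exact (((measurable_pi_apply j).comp measurable_fst).mul
        ((measurable_pi_apply i).comp measurable_fst)).aestronglyMeasurable
    · filter_upwards with ω
      rw [Real.norm_eq_abs, abs_mul]
      simp only [Pi.add_apply]
      nlinarith [sq_nonneg (|ω.1 j| - |ω.1 i|), sq_abs (ω.1 j), sq_abs (ω.1 i),
        abs_nonneg (ω.1 j), abs_nonneg (ω.1 i)]
  have iD : ∀ i : Fin m, Integrable (fun ω : (Fin m → ℝ) × ℝ => ω.2 * ω.1 i) ν := by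
    intro i
    refine Integrable.mono' ((iB.add (iA i)).const_mul (1/2)) ?_ ?_
    · exact (measurable_snd.mul
        ((measurable_pi_apply i).comp measurable_fst)).aestronglyMeasurable
    · filter_upwards with ω
      rw [Real.norm_eq_abs, abs_mul]
      simp only [Pi.add_apply]
      nlinarith [sq_nonneg (|ω.2| - |ω.1 i|), sq_abs (ω.2), sq_abs (ω.1 i),
        abs_nonneg (ω.2), abs_nonneg (ω.1 i)]
  -- the dominating function
  set G : (Fin m → ℝ) × ℝ → ℝ :=
    fun ω => (∑ j, ∑ k, |ω.1 j * x j| * |ω.1 k|) + ∑ k, |ω.2| * |ω.1 k| with hG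
  have iG : Integrable G ν := by
    refine Integrable.add (integrable_finset_sum _ fun j _ => integrable_finset_sum _ fun k _ => ?_)
      (integrable_finset_sum _ fun k _ => ?_)
    · have h : (fun ω : (Fin m → ℝ) × ℝ => |ω.1 j * x j| * |ω.1 k|)
          = fun ω => |x j| * |ω.1 j * ω.1 k| := by
        funext ω; rw [abs_mul, abs_mul]; ring
      rw [h]; exact ((iC j k).abs.const_mul _)
    · have h : (fun ω : (Fin m → ℝ) × ℝ => |ω.2| * |ω.1 k|)
          = fun ω => |ω.2 * ω.1 k| := by funext ω; rw [abs_mul]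
      rw [h]; exact (iD k).abs
  have hkey : ∀ ω : (Fin m → ℝ) × ℝ, |S ω| * ‖ω.1‖ ≤ G ω := by
    intro ω
    have h1 : |S ω| ≤ (∑ j, |ω.1 j * x j|) + |ω.2| :=
      (abs_add_le _ _).trans (by gcongr; exact Finset.abs_sum_le_sum_abs _ _)
    have h2 : ‖ω.1‖ ≤ ∑ k, |ω.1 k| := by
      have hnn : (0:ℝ) ≤ ∑ k, |ω.1 k| := by positivity
      rw [pi_norm_le_iff_of_nonneg hnn]
      intro i
      rw [Real.norm_eq_abs]
      exact Finset.single_le_sum (f := fun k => |ω.1 k|) (fun k _ => abs_nonneg _)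
        (Finset.mem_univ i)
    calc |S ω| * ‖ω.1‖
        ≤ ((∑ j, |ω.1 j * x j|) + |ω.2|) * (∑ k, |ω.1 k|) := by
          apply mul_le_mul h1 h2 (norm_nonneg _)
          positivity
      _ = G ω := by
          simp only [hG, add_mul, Finset.sum_mul, Finset.mul_sum, Finset.sum_add_distrib]
          rw [Finset.sum_comm]
  -- measurability of S
  have hSmeas : Measurable S := by
    apply Measurable.add ?_ measurable_snd
    exact Finset.measurable_sum _ fun i _ =>
      ((measurable_pi_apply i).comp measurable_fst).mul_const _
  -- integrability of the three main functions
  have if₁ : Integrable (fun ω : (Fin m → ℝ) × ℝ => max (S ω) 0 • ω.1) ν := by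
    refine Integrable.mono' iG ?_ ?_
    · exact ((hSmeas.max measurable_const).smul measurable_fst).aestronglyMeasurable
    · filter_upwards with ω
      rw [norm_smul, Real.norm_eq_abs]
      refine le_trans (mul_le_mul_of_nonneg_right ?_ (norm_nonneg _)) (hkey ω)
      rw [abs_of_nonneg (le_max_right _ _)]
      exact max_le (le_abs_self _) (abs_nonneg _)
  have if₂ : Integrable (fun ω : (Fin m → ℝ) × ℝ => max (-S ω) 0 • ω.1) ν := by
    refine Integrable.mono' iG ?_ ?_
    · exact ((hSmeas.neg.max measurable_const).smul measurable_fst).aestronglyMeasurable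
    · filter_upwards with ω
      rw [norm_smul, Real.norm_eq_abs]
      refine le_trans (mul_le_mul_of_nonneg_right ?_ (norm_nonneg _)) (hkey ω)
      rw [abs_of_nonneg (le_max_right _ _)]
      refine max_le ?_ (abs_nonneg _)
      rw [← abs_neg (S ω)]
      exact le_abs_self _
  have if₃ : Integrable (fun ω : (Fin m → ℝ) × ℝ => S ω • ω.1) ν := by
    refine Integrable.mono' iG ?_ ?_
    · exact (hSmeas.smul measurable_fst).aestronglyMeasurable
    · filter_upwards with ω
      rw [norm_smul, Real.norm_eq_abs]
      exact hkey ω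
  -- the symmetry argument
  have hSneg : ∀ ω : (Fin m → ℝ) × ℝ, S (-ω) = -S ω := by
    intro ω
    simp only [hS, Prod.fst_neg, Prod.snd_neg, Pi.neg_apply, neg_mul, neg_add_rev,
      Finset.sum_neg_distrib]
    ring
  have e1 : (∫ ω, max (S ω) 0 • ω.1 ∂ν) = -∫ ω, max (-S ω) 0 • ω.1 ∂ν := by
    have hflip : (∫ ω, max (S (-ω)) 0 • (-ω).1 ∂ν) = ∫ ω, max (S ω) 0 • ω.1 ∂ν :=
      hνneg.integral_comp hemb (fun ω : (Fin m → ℝ) × ℝ => (max (S ω) 0) • ω.1)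
    have hrw : (fun ω : (Fin m → ℝ) × ℝ => max (S (-ω)) 0 • (-ω).1)
        = fun ω => -(max (-S ω) 0 • ω.1) := by
      funext ω
      rw [hSneg ω]
      show max (-S ω) 0 • (-ω.1) = _
      rw [smul_neg]
    rw [← hflip, hrw, integral_neg]
  -- the sum identity
  have hmax : ∀ a : ℝ, max a 0 - max (-a) 0 = a := by
    intro a
    rcases le_total a 0 with h | h
    · rw [max_eq_right h, max_eq_left (neg_nonneg.mpr h)]; ring
    · rw [max_eq_left h, max_eq_right (neg_nonpos.mpr h)]; ring
  have hsplit : (∫ ω, S ω • ω.1 ∂ν)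
      = (∫ ω, max (S ω) 0 • ω.1 ∂ν) - ∫ ω, max (-S ω) 0 • ω.1 ∂ν := by
    rw [← integral_sub if₁ if₂]
    congr 1
    funext ω
    rw [← sub_smul, hmax]
  -- computing the second moment integral
  have hSint : (∫ ω, S ω • ω.1 ∂ν) = M₂ • x := by
    funext i
    have hcomp : (∫ ω, S ω • ω.1 ∂ν) i = ∫ ω, S ω * ω.1 i ∂ν := by
      exact (ContinuousLinearMap.integral_comp_comm
        (ContinuousLinearMap.proj (R := ℝ) (φ := fun _ : Fin m => ℝ) i) if₃).symm
    rw [hcomp]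
    have hexp : (fun ω : (Fin m → ℝ) × ℝ => S ω * ω.1 i)
        = fun ω => (∑ j, x j * (ω.1 j * ω.1 i)) + ω.2 * ω.1 i := by
      funext ω
      simp only [hS]
      rw [add_mul, Finset.sum_mul]
      congr 1
      exact Finset.sum_congr rfl fun j _ => by ring
    rw [hexp, integral_add (integrable_finset_sum _ fun j _ => (iC j i).const_mul (x j)) (iD i),
      integral_finset_sum _ fun j _ => (iC j i).const_mul (x j)]
    have hmix : (∫ ω, ω.2 * ω.1 i ∂ν) = 0 := by
      have h : (fun ω : (Fin m → ℝ) × ℝ => ω.2 * ω.1 i)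
          = fun ω => (fun w : Fin m → ℝ => w i) ω.1 * (fun t : ℝ => t) ω.2 := by
        funext ω; ring
      rw [h, hν, integral_prod_mul (f := fun w : Fin m → ℝ => w i) (g := fun t : ℝ => t),
        aux_mean_zero μ hsymm hint, mul_zero]
    have hcross : ∀ j : Fin m, (∫ ω, ω.1 j * ω.1 i ∂ν) = if j = i then M₂ else 0 := by
      intro j
      have hπint : (∫ ω, ω.1 j * ω.1 i ∂ν) = ∫ w, w j * w i ∂π := by
        have hm : AEStronglyMeasurable (fun w : Fin m → ℝ => w j * w i) (ν.map Prod.fst) := by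
          rw [hfst]
          exact ((measurable_pi_apply j).mul (measurable_pi_apply i)).aestronglyMeasurable
        have h := integral_map (μ := ν) measurable_fst.aemeasurable hm
        rw [hfst] at h
        exact h.symm
      rw [hπint]
      rcases eq_or_ne j i with rfl | hne
      · rw [if_pos rfl]
        have h : (fun w : Fin m → ℝ => w j * w j) = fun w => (w j) ^ 2 := by
          funext w; ring
        rw [h]
        have hm : AEStronglyMeasurable (fun t : ℝ => t ^ 2) (π.map (fun w => w j)) := by
          rw [hπ, aux_eval_map]
          exact (measurable_id.pow_const 2).aestronglyMeasurable
        have h2 := integral_map (μ := π) (measurable_pi_apply j).aemeasurable hm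
        rw [hπ, aux_eval_map] at h2
        rw [hπ, ← h2, hM]
      · rw [if_neg hne]
        have hfg : (fun w : Fin m → ℝ => w j * w i)
            = fun w => ∏ k, (if k = j then w k else 1) * (if k = i then w k else 1) := by
          funext w
          rw [Finset.prod_mul_distrib, Finset.prod_ite_eq', Finset.prod_ite_eq']
          simp
        rw [hπ, hfg, aux_pi_prod μ (fun k t => (if k = j then t else 1) * (if k = i then t else 1))]
        refine Finset.prod_eq_zero (Finset.mem_univ j) ?_
        simp only [if_pos rfl, if_neg hne, mul_one]
        exact aux_mean_zero μ hsymm hint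
    simp only [integral_const_mul, hcross, hmix, add_zero, mul_ite, mul_zero]
    rw [Finset.sum_ite_eq' Finset.univ i (fun j => x j * M₂)]
    simp [mul_comm]
  -- final assembly
  have e2 : (∫ ω, max (S ω) 0 • ω.1 ∂ν) + (∫ ω, max (S ω) 0 • ω.1 ∂ν) = M₂ • x := by
    rw [← hSint, hsplit, e1]
    abel
  show (∫ ω, max (S ω) 0 • ω.1 ∂ν) = (M₂ / 2) • x
  have h2 : (2:ℝ) • (∫ ω, max (S ω) 0 • ω.1 ∂ν) = M₂ • x := by
    rw [two_smul]; exact e2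
  calc (∫ ω, max (S ω) 0 • ω.1 ∂ν)
      = (2:ℝ)⁻¹ • ((2:ℝ) • ∫ ω, max (S ω) 0 • ω.1 ∂ν) := by
        rw [smul_smul]; norm_num
    _ = (2:ℝ)⁻¹ • (M₂ • x) := by rw [h2]
    _ = (M₂ / 2) • x := by rw [smul_smul]; congr 1; ring
end

section
/- Fix j ∈ {1,…,m}. Let w₁,…,w_m, b be i.i.d. real random variables with symmetric law μ and E[w_j²] = M₂ < ∞. Then for any x ∈ ℝ^m, 2 E[w_j σ(w₁x₁ + ⋯ + w_m x_m + b)] = x_j M₂. -/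
open MeasureTheory

/-- Fubini for finitely many coordinates, for an arbitrary probability measure. -/
theorem relu_aux_pi_integral_prod {m : ℕ} (μ : Measure ℝ) [IsProbabilityMeasure μ]
    (f : Fin m → ℝ → ℝ) :
    ∫ w : Fin m → ℝ, ∏ i, f i (w i) ∂(Measure.pi fun _ => μ) = ∏ i, ∫ t, f i t ∂μ := by
  letI : MeasureSpace ℝ := ⟨μ⟩
  haveI : SigmaFinite (volume : Measure ℝ) := inferInstanceAs (SigmaFinite μ)
  exact MeasureTheory.integral_fintype_prod_eq_prod (ι := Fin m) f (μ := fun _ => μ)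

theorem relu_aux_pi_integrable_prod {m : ℕ} (μ : Measure ℝ) [IsProbabilityMeasure μ]
    (f : Fin m → ℝ → ℝ) (hf : ∀ i, Integrable (f i) μ) :
    Integrable (fun w : Fin m → ℝ => ∏ i, f i (w i)) (Measure.pi fun _ => μ) := by
  letI : MeasureSpace ℝ := ⟨μ⟩
  haveI : SigmaFinite (volume : Measure ℝ) := inferInstanceAs (SigmaFinite μ)
  exact Integrable.fintype_prod (f := f) hf

theorem relu_moment_identity_coord {m : ℕ} (j : Fin m) (μ : Measure ℝ)
    [IsProbabilityMeasure μ]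
    (hsymm : μ.map (fun x => -x) = μ)
    (M₂ : ℝ) (hM : ∫ x, x ^ 2 ∂μ = M₂)
    (hint : Integrable (fun x : ℝ => x ^ 2) μ)
    (x : Fin m → ℝ) :
    2 * ∫ ω : (Fin m → ℝ) × ℝ, ω.1 j * max ((∑ i, ω.1 i * x i) + ω.2) 0
        ∂((Measure.pi fun _ : Fin m => μ).prod μ)
      = x j * M₂ := by
  classical
  set π : Measure (Fin m → ℝ) := Measure.pi fun _ : Fin m => μ with hπ
  set ν : Measure ((Fin m → ℝ) × ℝ) := π.prod μ with hνdef
  -- one-dimensional facts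
  have hsq : Integrable (fun t : ℝ => t * t) μ := by simpa [sq] using hint
  have hid : Integrable (fun t : ℝ => t) μ := by
    have h2 : MemLp (fun t : ℝ => t) 2 μ :=
      (memLp_two_iff_integrable_sq aestronglyMeasurable_id).2 (by simpa [sq] using hint)
    exact h2.integrable one_le_two
  have hmean : ∫ t, t ∂μ = 0 := by
    have h1 : ∫ t, t ∂(μ.map (fun x : ℝ => -x)) = ∫ t, -t ∂μ :=
      integral_map measurable_neg.aemeasurable aestronglyMeasurable_id
    rw [hsymm, integral_neg] at h1
    linarith
  have hmm : ∫ t, t * t ∂μ = M₂ := by simpa [sq] using hM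
  -- coordinate products as pi-products
  set F : Fin m → Fin m → ℝ → ℝ :=
    fun i k t => (if k = j then t else 1) * (if k = i then t else 1) with hFdef
  have hFeq : ∀ (i : Fin m) (w : Fin m → ℝ), (∏ k, F i k (w k)) = w j * w i := by
    intro i w
    rw [hFdef]
    simp only [Finset.prod_mul_distrib, Finset.prod_ite_eq', Finset.mem_univ, if_true]
  have hFint : ∀ i k, Integrable (F i k) μ := by
    intro i k
    rw [hFdef]
    rcases eq_or_ne k j with hkj | hkj
    · subst hkj
      rcases eq_or_ne k i with hki | hki
      · subst hki; simpa using hsq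
      · simpa [hki] using hid
    · rcases eq_or_ne k i with hki | hki
      · subst hki; simpa [hkj] using hid
      · simp only [hkj, hki, if_false, mul_one]; exact integrable_const (1 : ℝ)
  have hWWpiInt : ∀ i, Integrable (fun w : Fin m → ℝ => w j * w i) π := by
    intro i
    have := relu_aux_pi_integrable_prod μ (F i) (hFint i)
    refine this.congr (Filter.Eventually.of_forall fun w => ?_)
    exact hFeq i w
  have hWWpi : ∀ i, ∫ w, w j * w i ∂π = if i = j then M₂ else 0 := by
    intro i
    have h1 : ∫ w, w j * w i ∂π = ∏ k, ∫ t, F i k t ∂μ := by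
      rw [show (fun w : Fin m → ℝ => w j * w i) = fun w => ∏ k, F i k (w k) by
        funext w; rw [hFeq]]
      exact relu_aux_pi_integral_prod μ (F i)
    rw [h1]
    by_cases hij : i = j
    · subst hij
      have h2 : ∀ k, ∫ t, F i k t ∂μ = if k = i then M₂ else 1 := by
        intro k
        by_cases hki : k = i <;> simp only [hFdef, hki, if_true, if_false, mul_one]
        · exact hmm
        · simp
      rw [Finset.prod_congr rfl fun k _ => h2 k]
      simp
    · rw [if_neg hij]
      refine Finset.prod_eq_zero (Finset.mem_univ j) ?_
      have hji : ¬ j = i := fun h => hij h.symm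
      have : F i j = fun t => t := by
        funext t
        simp [hFdef, hji]
      rw [this, hmean]
  -- the coordinate function w ↦ w j on π
  have hWj : Integrable (fun w : Fin m → ℝ => w j) π := by
    have := relu_aux_pi_integrable_prod μ (fun k t => if k = j then t else 1)
      (by intro k; by_cases hk : k = j <;> simp only [hk, if_true, if_false]
          exacts [hid, integrable_const 1])
    refine this.congr (Filter.Eventually.of_forall fun w => ?_)
    simp
  have hWjpi : ∫ w, w j ∂π = 0 := by
    have h1 : ∫ w, w j ∂π = ∏ k, ∫ t, (if k = j then t else (1 : ℝ)) ∂μ := by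
      rw [show (fun w : Fin m → ℝ => w j)
          = fun w => ∏ k, (if k = j then w k else 1) by funext w; simp]
      exact relu_aux_pi_integral_prod μ (fun k t => if k = j then t else 1)
    rw [h1]
    refine Finset.prod_eq_zero (Finset.mem_univ j) ?_
    simpa using hmean
  -- integrability over ν of the relevant products
  have hWW : ∀ i, Integrable (fun ω : (Fin m → ℝ) × ℝ => ω.1 j * ω.1 i) ν := by
    intro i
    have := (hWWpiInt i).mul_prod (integrable_const (1 : ℝ)) (ν := μ)
    simpa using this
  have hWB : Integrable (fun ω : (Fin m → ℝ) × ℝ => ω.1 j * ω.2) ν :=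
    hWj.mul_prod hid
  -- marginal integral over first coordinate
  have hfst : ∀ f : (Fin m → ℝ) → ℝ, ∫ ω : (Fin m → ℝ) × ℝ, f ω.1 ∂ν = ∫ w, f w ∂π := by
    intro f
    have := integral_prod_mul (μ := π) (ν := μ) f (fun _ => (1 : ℝ))
    simpa using this
  -- the dominating function
  set D : (Fin m → ℝ) × ℝ → ℝ :=
    fun ω => (∑ i, |x i| * |ω.1 j * ω.1 i|) + |ω.1 j * ω.2| with hDdef
  have hDint : Integrable D ν := by
    refine Integrable.add ?_ hWB.abs
    exact integrable_finset_sum _ fun i _ => ((hWW i).abs.const_mul |x i|)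
  set G : (Fin m → ℝ) × ℝ → ℝ :=
    fun ω => ω.1 j * max ((∑ i, ω.1 i * x i) + ω.2) 0 with hGdef
  set S : (Fin m → ℝ) × ℝ → ℝ := fun ω => (∑ i, ω.1 i * x i) + ω.2 with hSdef
  have hbound : ∀ ω : (Fin m → ℝ) × ℝ, |ω.1 j * max (S ω) 0| ≤ D ω := by
    intro ω
    have h1 : |max (S ω) 0| ≤ |S ω| := by
      rw [abs_of_nonneg (le_max_right _ _)]
      exact max_le (le_abs_self _) (abs_nonneg _)
    calc |ω.1 j * max (S ω) 0| = |ω.1 j| * |max (S ω) 0| := abs_mul _ _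
      _ ≤ |ω.1 j| * |S ω| := mul_le_mul_of_nonneg_left h1 (abs_nonneg _)
      _ ≤ |ω.1 j| * ((∑ i, |ω.1 i * x i|) + |ω.2|) := by
          refine mul_le_mul_of_nonneg_left ?_ (abs_nonneg _)
          exact (abs_add_le _ _).trans (by
            gcongr
            exact Finset.abs_sum_le_sum_abs _ _)
      _ = D ω := by
          rw [hDdef, mul_add, Finset.mul_sum]
          congr 1
          · refine Finset.sum_congr rfl fun i _ => ?_
            simp only [abs_mul]
            ring
          · rw [abs_mul]
  have hGmeas : Measurable G := by
    rw [hGdef]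
    fun_prop
  have hGint : Integrable G ν := by
    refine Integrable.mono' hDint hGmeas.aestronglyMeasurable
      (Filter.Eventually.of_forall fun ω => ?_)
    simpa [hGdef, hSdef, Real.norm_eq_abs, abs_mul] using hbound ω
  -- symmetry: negation is measure preserving
  have hneg : MeasurePreserving (fun t : ℝ => -t) μ μ := ⟨measurable_neg, hsymm⟩
  have hpineg : MeasurePreserving (fun w : Fin m → ℝ => -w) π π :=
    measurePreserving_pi (fun _ : Fin m => μ) (fun _ => μ) (fun _ => hneg)
  have hP : MeasurePreserving (fun ω : (Fin m → ℝ) × ℝ => -ω) ν ν := hpineg.prod hneg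
  have he : MeasurableEmbedding (fun ω : (Fin m → ℝ) × ℝ => -ω) :=
    (Homeomorph.neg ((Fin m → ℝ) × ℝ)).toMeasurableEquiv.measurableEmbedding
  have hflip : ∫ ω, G (-ω) ∂ν = ∫ ω, G ω ∂ν := hP.integral_comp he G
  have hGnegint : Integrable (fun ω : (Fin m → ℝ) × ℝ => G (-ω)) ν := by
    have h1 : Integrable G (ν.map (fun ω : (Fin m → ℝ) × ℝ => -ω)) := by
      rw [hP.map_eq]; exact hGint
    exact he.integrable_map_iff.mp h1
  -- G(-ω) in explicit form
  have hGneg : ∀ ω : (Fin m → ℝ) × ℝ, G (-ω) = -(ω.1 j) * max (-(S ω)) 0 := by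
    intro ω
    have h1 : (∑ i, (-ω).1 i * x i) + (-ω).2 = -(S ω) := by
      simp only [hSdef, Prod.fst_neg, Prod.snd_neg, Pi.neg_apply, neg_mul,
        Finset.sum_neg_distrib]
      ring
    rw [hGdef]
    simp only [h1]
    rfl
  -- key identity: 2 ∫ G = ∫ w_j * S
  have hprodint : Integrable (fun ω : (Fin m → ℝ) × ℝ => ω.1 j * S ω) ν := by
    have h1 : Integrable (fun ω : (Fin m → ℝ) × ℝ =>
        (∑ i, x i * (ω.1 j * ω.1 i)) + ω.1 j * ω.2) ν :=
      (integrable_finset_sum _ fun i _ => (hWW i).const_mul (x i)).add hWB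
    refine h1.congr (Filter.Eventually.of_forall fun ω => ?_)
    rw [hSdef]
    simp only [mul_add, Finset.mul_sum]
    congr 1
    exact Finset.sum_congr rfl fun i _ => by ring
  have hkey : 2 * ∫ ω, G ω ∂ν = ∫ ω, ω.1 j * S ω ∂ν := by
    have h2 : 2 * ∫ ω, G ω ∂ν = ∫ ω, (G ω + G (-ω)) ∂ν := by
      rw [integral_add hGint hGnegint, hflip]; ring
    rw [h2]
    refine integral_congr_ae (Filter.Eventually.of_forall fun ω => ?_)
    show G ω + G (-ω) = ω.1 j * S ω
    rw [hGneg ω]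
    simp only [hGdef]
    rw [show (∑ i, ω.1 i * x i) + ω.2 = S ω from rfl]
    have h := max_zero_sub_max_neg_zero_eq_self (S ω)
    linear_combination ω.1 j * h
  -- compute ∫ w_j * S
  have hcomp : ∫ ω, ω.1 j * S ω ∂ν = x j * M₂ := by
    have h1 : ∫ ω, ω.1 j * S ω ∂ν
        = ∫ ω : (Fin m → ℝ) × ℝ, ((∑ i, x i * (ω.1 j * ω.1 i)) + ω.1 j * ω.2) ∂ν := by
      refine integral_congr_ae (Filter.Eventually.of_forall fun ω => ?_)
      rw [hSdef]
      simp only [mul_add, Finset.mul_sum]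
      congr 1
      exact Finset.sum_congr rfl fun i _ => by ring
    rw [h1, integral_add (integrable_finset_sum _ fun i _ => (hWW i).const_mul (x i)) hWB,
      integral_finset_sum _ fun i _ => (hWW i).const_mul (x i)]
    have h2 : ∫ ω : (Fin m → ℝ) × ℝ, ω.1 j * ω.2 ∂ν = 0 := by
      rw [hνdef, integral_prod_mul (fun w : Fin m → ℝ => w j) (fun t : ℝ => t), hWjpi,
        hmean, mul_zero]
    have h3 : ∀ i, ∫ ω : (Fin m → ℝ) × ℝ, x i * (ω.1 j * ω.1 i) ∂ν
        = x i * (if i = j then M₂ else 0) := by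
      intro i
      rw [integral_const_mul, hfst (fun w => w j * w i), hWWpi i]
    rw [Finset.sum_congr rfl fun i _ => h3 i, h2, add_zero]
    simp [Finset.sum_ite_eq']
  -- conclude
  calc 2 * ∫ ω : (Fin m → ℝ) × ℝ, ω.1 j * max ((∑ i, ω.1 i * x i) + ω.2) 0 ∂ν
      = 2 * ∫ ω, G ω ∂ν := rfl
    _ = ∫ ω, ω.1 j * S ω ∂ν := hkey
    _ = x j * M₂ := hcomp
end

section
/- For all real t and all real b, one has -∫₀^∞ (σ(t - b) e^{ib} + σ(-t - b) e^{-ib}) db = e^{it} - i t - 1, where the integral is over b ∈ [0, ∞) and σ is the ReLU function. -/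
open MeasureTheory

lemma relu_aux (s : ℝ) (hs : 0 ≤ s) (e : ℂ) (he : e * e = -1) :
    (∫ b in Set.Ioi (0 : ℝ), ((max (s - b) 0 : ℝ) : ℂ) * Complex.exp (e * b))
      = -Complex.exp (e * s) + e * s + 1 := by
  have h1 : (∫ b in Set.Ioi (0 : ℝ), ((max (s - b) 0 : ℝ) : ℂ) * Complex.exp (e * b))
      = ∫ b in Set.Ioc (0 : ℝ) s, ((max (s - b) 0 : ℝ) : ℂ) * Complex.exp (e * b) := by
    rw [show Set.Ioc (0:ℝ) s = Set.Ioi 0 ∩ Set.Ioc 0 s from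
      (Set.inter_eq_self_of_subset_right Set.Ioc_subset_Ioi_self).symm,
      ← MeasureTheory.setIntegral_indicator measurableSet_Ioc]
    refine MeasureTheory.setIntegral_congr_fun measurableSet_Ioi ?_
    intro b hb
    simp only [Set.indicator]
    by_cases hbs : b ∈ Set.Ioc (0 : ℝ) s
    · simp [hbs]
    · have hb0 : (0:ℝ) < b := hb
      have hsb : s < b := by
        by_contra h
        exact hbs ⟨hb0, le_of_not_gt h⟩
      simp [hbs, max_eq_right (by linarith : s - b ≤ 0)]
  rw [h1, ← intervalIntegral.integral_of_le hs]
  have h2 : ∀ b ∈ Set.uIcc (0:ℝ) s,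
      ((max (s - b) 0 : ℝ) : ℂ) * Complex.exp (e * b)
        = (((s:ℂ) - b)) * Complex.exp (e * b) := by
    intro b hb
    rw [Set.uIcc_of_le hs] at hb
    have : max (s - b) 0 = s - b := max_eq_left (by linarith [hb.1, hb.2])
    rw [this]; push_cast; ring
  rw [intervalIntegral.integral_congr h2]
  have hFTC : (∫ b in (0:ℝ)..s, (((s:ℂ) - b)) * Complex.exp (e * b))
      = (-e * ((s:ℂ) - s) - 1) * Complex.exp (e * s)
        - (-e * ((s:ℂ) - 0) - 1) * Complex.exp (e * 0) := by
    refine intervalIntegral.integral_eq_sub_of_hasDerivAt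
      (f := fun b : ℝ => (-e * ((s:ℂ) - b) - 1) * Complex.exp (e * b))
      (f' := fun b : ℝ => ((s:ℂ) - b) * Complex.exp (e * b)) (fun b hb => ?_) ?_
    · have hb1 : HasDerivAt (fun b : ℝ => (b : ℂ)) 1 b := Complex.ofRealCLM.hasDerivAt
      have hlin : HasDerivAt (fun b : ℝ => -e * ((s:ℂ) - b) - 1) e b := by
        have := (((hb1.const_sub (s:ℂ)).const_mul (-e)).sub_const 1)
        refine this.congr_deriv ?_
        ring
      have hexp : HasDerivAt (fun b : ℝ => Complex.exp (e * b))
          (Complex.exp (e * b) * e) b := by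
        have := (hb1.const_mul e).cexp
        simpa using this
      have := hlin.mul hexp
      refine this.congr_deriv ?_
      linear_combination (-((s:ℂ) - b) * Complex.exp (e * b)) * he
    · exact (Continuous.intervalIntegrable (by fun_prop) 0 s)
  rw [hFTC]
  simp [Complex.exp_zero]
  ring

theorem relu_integral_exp_identity (t : ℝ) :
    -(∫ b in Set.Ioi (0 : ℝ),
        ((max (t - b) 0 : ℝ) * Complex.exp (Complex.I * b)
          + (max (-t - b) 0 : ℝ) * Complex.exp (-(Complex.I * b))))
      = Complex.exp (Complex.I * t) - Complex.I * t - 1 := by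
  rcases le_or_gt 0 t with ht | ht
  · have hcongr : (∫ b in Set.Ioi (0 : ℝ),
        ((max (t - b) 0 : ℝ) * Complex.exp (Complex.I * b)
          + (max (-t - b) 0 : ℝ) * Complex.exp (-(Complex.I * b))))
        = ∫ b in Set.Ioi (0 : ℝ), ((max (t - b) 0 : ℝ) : ℂ) * Complex.exp (Complex.I * b) := by
      refine MeasureTheory.setIntegral_congr_fun measurableSet_Ioi ?_
      intro b hb
      have hb0 : (0:ℝ) < b := hb
      have : max (-t - b) 0 = 0 := max_eq_right (by linarith)
      simp [this]
    rw [hcongr, relu_aux t ht Complex.I Complex.I_mul_I]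
    ring
  · have hcongr : (∫ b in Set.Ioi (0 : ℝ),
        ((max (t - b) 0 : ℝ) * Complex.exp (Complex.I * b)
          + (max (-t - b) 0 : ℝ) * Complex.exp (-(Complex.I * b))))
        = ∫ b in Set.Ioi (0 : ℝ), ((max (-t - b) 0 : ℝ) : ℂ)
            * Complex.exp ((-Complex.I) * b) := by
      refine MeasureTheory.setIntegral_congr_fun measurableSet_Ioi ?_
      intro b hb
      have hb0 : (0:ℝ) < b := hb
      have : max (t - b) 0 = 0 := max_eq_right (by linarith)
      simp [this, neg_mul]
    have hI : (-Complex.I) * (-Complex.I) = -1 := by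
      rw [neg_mul_neg, Complex.I_mul_I]
    rw [hcongr, relu_aux (-t) (by linarith) (-Complex.I) hI]
    have h1 : (-Complex.I) * ((-t : ℝ) : ℂ) = Complex.I * t := by push_cast; ring
    rw [h1]
    ring
end

section
/- Let T : {w ∈ ℝ^d : 0 < ‖w‖₁ < 1/2} → {w ∈ ℝ^d : ‖w‖₁ > 1/2} be defined by T(w) = w / (4‖w‖₁²). Then at every point w where all coordinates are nonzero, T is differentiable with Jacobian determinant satisfying |det(∇T(w))| = 1/(2‖w‖₁)^{2d}. -/
theorem jacobian_det_inversion_map {d : ℕ} (hd : 0 < d) (w : Fin d → ℝ)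
    (hw : ∀ i, w i ≠ 0) (hlt : ∑ i, |w i| < 1 / 2) (hpos : 0 < ∑ i, |w i|) :
    ∃ T' : (Fin d → ℝ) →L[ℝ] (Fin d → ℝ),
      HasFDerivAt (fun v : Fin d → ℝ => (4 * (∑ i, |v i|) ^ 2)⁻¹ • v) T' w ∧
      |LinearMap.det (T'.toLinearMap)| = 1 / (2 * ∑ i, |w i|) ^ (2 * d) := by
  set N : ℝ := ∑ i, |w i| with hNdef
  have hN0 : N ≠ 0 := ne_of_gt hpos
  set s : Fin d → ℝ := fun i => (SignType.sign (w i) : ℝ) with hsdef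
  have hs : ∀ i, s i * w i = |w i| := by
    intro i
    rcases lt_or_gt_of_ne (hw i) with h | h
    · simp [hsdef, h, abs_of_neg h]
    · simp [hsdef, h, abs_of_pos h]
  -- derivative of the l1 norm
  set L : (Fin d → ℝ) →L[ℝ] ℝ :=
    ∑ i, (s i) • (ContinuousLinearMap.proj i : (Fin d → ℝ) →L[ℝ] ℝ) with hLdef
  have hLapp : ∀ h : Fin d → ℝ, L h = ∑ i, s i * h i := by
    intro h
    simp [hLdef, ContinuousLinearMap.sum_apply]
  have hLw : L w = N := by
    rw [hLapp]
    simp only [hs, hNdef]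
  have hL : HasFDerivAt (fun v : Fin d → ℝ => ∑ i, |v i|) L w := by
    rw [hLdef]
    apply HasFDerivAt.fun_sum
    intro i _
    exact (hasDerivAt_abs (hw i)).comp_hasFDerivAt w
      (ContinuousLinearMap.proj i : (Fin d → ℝ) →L[ℝ] ℝ).hasFDerivAt
  -- derivative of the scalar factor
  set c : ℝ := (4 * N ^ 2)⁻¹ with hcdef
  have h4N : (4 : ℝ) * N ^ 2 ≠ 0 := by positivity
  have hg : HasDerivAt (fun t : ℝ => (4 * t ^ 2)⁻¹)
      (-(4 * ((2 : ℕ) * N ^ (2 - 1))) / (4 * N ^ 2) ^ 2) N :=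
    (((hasDerivAt_pow 2 N).const_mul 4).inv h4N)
  have hcF : HasFDerivAt (fun v : Fin d → ℝ => (4 * (∑ i, |v i|) ^ 2)⁻¹)
      ((-(4 * ((2 : ℕ) * N ^ (2 - 1))) / (4 * N ^ 2) ^ 2) • L) w :=
    by have := hg.comp_hasFDerivAt w hL; exact this
  -- total derivative
  set C : (Fin d → ℝ) →L[ℝ] ℝ :=
    (-(4 * ((2 : ℕ) * N ^ (2 - 1))) / (4 * N ^ 2) ^ 2) • L with hCdef
  set T' : (Fin d → ℝ) →L[ℝ] (Fin d → ℝ) :=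
    c • ContinuousLinearMap.id ℝ (Fin d → ℝ) + C.smulRight w with hTdef
  refine ⟨T', ?_, ?_⟩
  · have := hcF.smul (hasFDerivAt_id w)
    simpa [hTdef, hcdef] using this
  · -- determinant computation
    have hCapp : ∀ h : Fin d → ℝ, C h = (-(8 * N) / (16 * N ^ 4)) * ∑ i, s i * h i := by
      intro h
      simp only [hCdef, ContinuousLinearMap.smul_apply, smul_eq_mul, hLapp]
      ring_nf
    set v : Fin d → ℝ := fun j => (-(8 * N) / (16 * N ^ 4)) * s j with hvdef
    have hCv : ∀ h : Fin d → ℝ, C h = ∑ j, v j * h j := by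
      intro h
      rw [hCapp, Finset.mul_sum]
      exact Finset.sum_congr rfl fun j _ => by rw [hvdef]; ring
    set A : Matrix (Fin d) (Fin d) ℝ :=
      c • (1 + Matrix.replicateCol (Fin 1) (c⁻¹ • w) * Matrix.replicateRow (Fin 1) v) with hAdef
    have hc_pos : 0 < c := by rw [hcdef]; positivity
    have hc0 : c ≠ 0 := ne_of_gt hc_pos
    have hAentry : ∀ i j, A i j = (if i = j then c else 0) + w i * v j := by
      intro i j
      simp only [hAdef, Matrix.smul_apply, Matrix.add_apply, Matrix.one_apply,
        Matrix.mul_apply, Matrix.replicateCol_apply, Matrix.replicateRow_apply, Finset.univ_unique,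
        Finset.sum_singleton, Pi.smul_apply, smul_eq_mul]
      split_ifs with hij
      · field_simp
      · field_simp; simp
    have hTA : T'.toLinearMap = Matrix.toLin' A := by
      apply LinearMap.ext
      intro h
      funext i
      have h1 : T' h i = c * h i + C h * w i := by
        simp [hTdef, ContinuousLinearMap.smul_apply, ContinuousLinearMap.smulRight_apply,
          smul_eq_mul, mul_comm]
      rw [show (T'.toLinearMap) h i = T' h i from rfl, h1, Matrix.toLin'_apply]
      show c * h i + C h * w i = ∑ j, A i j * h j
      rw [Finset.sum_congr rfl fun j _ => by rw [hAentry, add_mul]]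
      rw [Finset.sum_add_distrib]
      congr 1
      · rw [Finset.sum_eq_single i]
        · simp
        · intro j _ hj; simp [Ne.symm hj]
        · intro hh; simp at hh
      · rw [hCv, Finset.sum_mul]
        exact Finset.sum_congr rfl fun j _ => by ring
    rw [hTA, LinearMap.det_toLin']
    have hvw : dotProduct v (c⁻¹ • w) = -2 := by
      have key : ∀ j, v j * ((c⁻¹ • w) j) =
          (-(8 * N) / (16 * N ^ 4) * c⁻¹) * (s j * w j) := by
        intro j; simp only [hvdef, Pi.smul_apply, smul_eq_mul]; ring
      rw [dotProduct, Finset.sum_congr rfl fun j _ => key j, ← Finset.mul_sum]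
      simp only [hs]
      rw [← hNdef, hcdef, inv_inv]
      field_simp
      ring
    rw [hAdef, Matrix.det_smul, show Matrix.det (1 + Matrix.replicateCol (Fin 1) (c⁻¹ • w) * Matrix.replicateRow (Fin 1) v :
      Matrix (Fin d) (Fin d) ℝ) =
      1 + dotProduct v (c⁻¹ • w) from Matrix.det_one_add_replicateCol_mul_replicateRow _ _, hvw]
    rw [show (1 : ℝ) + -2 = -1 by ring]
    simp only [Fintype.card_fin]
    rw [abs_mul, abs_pow, abs_of_pos hc_pos, abs_neg, abs_one, mul_one, hcdef]
    rw [show (2 : ℕ) * d = d * 2 by ring, pow_mul, mul_pow]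
    rw [eq_div_iff (by positivity)]
    rw [show ((2:ℝ) ^ d * N ^ d) ^ 2 = (4 * N ^ 2) ^ d by
      rw [mul_pow, ← pow_mul, ← pow_mul, mul_comm d 2, pow_mul, pow_mul, ← mul_pow]
      norm_num]
    rw [← mul_pow, inv_mul_cancel₀ h4N, one_pow]
end

section
/- Let F : ([-1,1]^d)^ℤ → ℝ^ℤ be causal time-invariant with approximately finite memory, and suppose each F*_m has finite modulus of continuity. Let η be any weighting sequence. Then for any ε > 0, setting m = m_F(ε/3), any u, v ∈ ([-1,1]^d)^{ℤ₋} with ‖u - v‖_η ≤ η_{m-1} ω_{F*_m}^{-1}(ε/3) satisfy |F*(u) - F*(v)| ≤ ε. -/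
/-- Proposition 1(1): if `m` satisfies `𝓔_F(m) ≤ ε/3` and `δ` satisfies
`ω_{F*_m}(δ) ≤ ε/3`, then any two valid left inputs with weighted distance at most
`η_{m-1}·δ` have `|F*(u) - F*(v)| ≤ ε`.  Here `F*_m` is realized as
`u ↦ F*(…,0,u_{-m+1:0})` via truncation to the window `(-m, 0]`. -/
theorem fading_memory_from_finite_memory_and_continuity {d : ℕ} (η : ℕ → ℝ)
    (hpos : ∀ n, 0 < η n) (hle : ∀ n, η n ≤ 1)
    (hmono : ∀ n k, n ≤ k → η k ≤ η n)
    (hlim : Filter.Tendsto η Filter.atTop (nhds 0))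
    (Fstar : (ℤ → Fin d → ℝ) → ℝ)
    (ε δ : ℝ) (hε : 0 < ε) (hδ : 0 < δ) (m : ℕ) (hm : 0 < m)
    (hmem : ∀ u : ℤ → Fin d → ℝ, (∀ t i, |u t i| ≤ 1) →
      |Fstar u - Fstar (fun t => if -(m : ℤ) < t ∧ t ≤ 0 then u t else 0)| ≤ ε / 3)
    (hω : ∀ u v : ℤ → Fin d → ℝ, (∀ t i, |u t i| ≤ 1) → (∀ t i, |v t i| ≤ 1) →
      (∀ (t : ℤ) (i : Fin d), |u t i - v t i| ≤ δ) →
      |Fstar (fun t => if -(m : ℤ) < t ∧ t ≤ 0 then u t else 0)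
        - Fstar (fun t => if -(m : ℤ) < t ∧ t ≤ 0 then v t else 0)| ≤ ε / 3) :
    ∀ u v : ℤ → Fin d → ℝ, (∀ t i, |u t i| ≤ 1) → (∀ t i, |v t i| ≤ 1) →
      (∀ (n : ℕ) (i : Fin d),
        η n * |u (-(n : ℤ)) i - v (-(n : ℤ)) i| ≤ η (m - 1) * δ) →
      |Fstar u - Fstar v| ≤ ε := by
  intro u v hu hv hη
  -- auxiliary input agreeing with u on the window and with v elsewhere
  set u' : ℤ → Fin d → ℝ := fun t => if -(m : ℤ) < t ∧ t ≤ 0 then u t else v t with hu'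
  have hu'b : ∀ t i, |u' t i| ≤ 1 := by
    intro t i; simp only [hu']; split <;> [exact hu t i; exact hv t i]
  have hclose : ∀ (t : ℤ) (i : Fin d), |u' t i - v t i| ≤ δ := by
    intro t i
    simp only [hu']
    split
    · rename_i h
      obtain ⟨h1, h2⟩ := h
      -- t = -n with n < m
      obtain ⟨n, rfl⟩ : ∃ n : ℕ, t = -(n : ℤ) := ⟨(-t).toNat, by omega⟩
      have hnm : n ≤ m - 1 := by omega
      have h1 : η (m - 1) ≤ η n := hmono n (m - 1) hnm
      have := hη n i
      have hδ' : η n * |u (-(n : ℤ)) i - v (-(n : ℤ)) i| ≤ η n * δ :=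
        le_trans this (by nlinarith [hδ])
      exact le_of_mul_le_mul_left hδ' (hpos n)
    · simpa using hδ.le
  have htr : (fun t => if -(m : ℤ) < t ∧ t ≤ 0 then u' t else 0)
      = (fun t => if -(m : ℤ) < t ∧ t ≤ 0 then u t else 0) := by
    funext t; simp only [hu']; split <;> simp_all
  have h1 := hmem u hu
  have h2 := hω u' v hu'b hv hclose
  rw [htr] at h2
  have h3 := hmem v hv
  calc |Fstar u - Fstar v|
      ≤ |Fstar u - Fstar (fun t => if -(m : ℤ) < t ∧ t ≤ 0 then u t else 0)|
        + |Fstar (fun t => if -(m : ℤ) < t ∧ t ≤ 0 then u t else 0)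
            - Fstar (fun t => if -(m : ℤ) < t ∧ t ≤ 0 then v t else 0)|
        + |Fstar (fun t => if -(m : ℤ) < t ∧ t ≤ 0 then v t else 0) - Fstar v| := by
        have := abs_sub_le (Fstar u) (Fstar (fun t => if -(m : ℤ) < t ∧ t ≤ 0 then u t else 0)) (Fstar v)
        have := abs_sub_le (Fstar (fun t => if -(m : ℤ) < t ∧ t ≤ 0 then u t else 0))
          (Fstar (fun t => if -(m : ℤ) < t ∧ t ≤ 0 then v t else 0)) (Fstar v)
        linarith
    _ ≤ ε / 3 + ε / 3 + ε / 3 := by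
        have h3' : |Fstar (fun t => if -(m : ℤ) < t ∧ t ≤ 0 then v t else 0) - Fstar v| ≤ ε / 3 := by
          rw [abs_sub_comm]; exact h3
        linarith
    _ = ε := by ring
end

section
/- Let f(x) = ∫_{[-1/2,1/2]^d} g(w) σ(w·x) dw with measurable |g| ≤ B, and let w₁,…,w_n be i.i.d. uniform on [-1/2,1/2]^d. Then with probability at least 1 - δ, sup over x ∈ [-r,r]^d of |f(x) - (1/n) Σ_{i=1}^n g(wᵢ)σ(wᵢ·x)| ≤ Brd (2√(2d log(n+1)/n) + √(log(2/δ)/(2n))). -/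
open MeasureTheory

section AuxLemmas
open Real

lemma tanh_deriv (x : ℝ) : HasDerivAt Real.tanh (1/(Real.cosh x)^2) x := by
  have h := ((Real.hasDerivAt_sinh x).div (Real.hasDerivAt_cosh x) (ne_of_gt (Real.cosh_pos x)))
  have e : (Real.cosh x * Real.cosh x - Real.sinh x * Real.sinh x) / (Real.cosh x)^2
      = 1/(Real.cosh x)^2 := by
    have hc := Real.cosh_sq_sub_sinh_sq x
    have : Real.cosh x * Real.cosh x - Real.sinh x * Real.sinh x = 1 := by nlinarith [hc]
    rw [this]
  have ht : Real.tanh = fun y => Real.sinh y / Real.cosh y := by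
    funext y; exact Real.tanh_eq_sinh_div_cosh y
  rw [ht]; rw [← e]; exact h

lemma kprime_mono : Monotone (fun v : ℝ => v - Real.tanh v) := by
  have hd : ∀ x : ℝ, HasDerivAt (fun v : ℝ => v - Real.tanh v) (1 - 1/(Real.cosh x)^2) x := by
    intro x
    exact (hasDerivAt_id x).sub (tanh_deriv x)
  have hdiff : Differentiable ℝ (fun v : ℝ => v - Real.tanh v) := fun x => (hd x).differentiableAt
  apply monotone_of_deriv_nonneg hdiff
  intro x
  rw [(hd x).deriv]
  have h1 : (1:ℝ) ≤ Real.cosh x := Real.one_le_cosh x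
  have h2 : (1:ℝ) ≤ (Real.cosh x)^2 := by nlinarith
  have : 1/(Real.cosh x)^2 ≤ 1 := by
    rw [div_le_one (by positivity)]; exact h2
  linarith


lemma kderiv (x : ℝ) : HasDerivAt (fun v : ℝ => v^2/2 - Real.log (Real.cosh v)) (x - Real.tanh x) x := by
  have h1 : HasDerivAt (fun v : ℝ => v^2/2) x x := by
    simpa using ((hasDerivAt_pow 2 x).div_const 2)
  have h2 : HasDerivAt (fun v : ℝ => Real.log (Real.cosh v)) (Real.tanh x) x := by
    have := (Real.hasDerivAt_cosh x).log (ne_of_gt (Real.cosh_pos x))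
    simpa [Real.tanh_eq_sinh_div_cosh] using this
  exact h1.sub h2

lemma tangent_ineq (c v : ℝ) :
    c^2/2 - Real.log (Real.cosh c) + (c - Real.tanh c)*(v - c)
      ≤ v^2/2 - Real.log (Real.cosh v) := by
  set k : ℝ → ℝ := fun v => v^2/2 - Real.log (Real.cosh v) with hk
  have hcont : Continuous k := by
    apply Continuous.sub
    · continuity
    · exact Real.continuous_cosh.log (fun x => ne_of_gt (Real.cosh_pos x))
  have hkv : k v = v^2/2 - Real.log (Real.cosh v) := rfl
  have hkc : k c = c^2/2 - Real.log (Real.cosh c) := rfl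
  rcases lt_trichotomy c v with h | h | h
  · obtain ⟨ξ, hξ, hslope⟩ := exists_hasDerivAt_eq_slope k (fun x => x - Real.tanh x) h
      (hcont.continuousOn) (fun x _ => kderiv x)
    have hmono : c - Real.tanh c ≤ ξ - Real.tanh ξ := kprime_mono (le_of_lt hξ.1)
    have hvc : (0:ℝ) < v - c := by linarith
    have heq : k v - k c = (ξ - Real.tanh ξ) * (v - c) :=
      (div_eq_iff (ne_of_gt hvc)).mp hslope.symm
    have h2 : (c - Real.tanh c) * (v - c) ≤ k v - k c := by
      rw [heq]; exact mul_le_mul_of_nonneg_right hmono hvc.le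
    rw [hkv, hkc] at h2
    linarith
  · subst h; simp
  · obtain ⟨ξ, hξ, hslope⟩ := exists_hasDerivAt_eq_slope k (fun x => x - Real.tanh x) h
      (hcont.continuousOn) (fun x _ => kderiv x)
    have hmono : ξ - Real.tanh ξ ≤ c - Real.tanh c := kprime_mono (le_of_lt hξ.2)
    have hvc : (0:ℝ) < c - v := by linarith
    have heq : k c - k v = (ξ - Real.tanh ξ) * (c - v) :=
      (div_eq_iff (ne_of_gt hvc)).mp hslope.symm
    have h2 : k c - k v ≤ (c - Real.tanh c) * (c - v) := by
      rw [heq]; exact mul_le_mul_of_nonneg_right hmono hvc.le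
    rw [hkv, hkc] at h2
    have h3 : (c - Real.tanh c) * (c - v) = -((c - Real.tanh c) * (v - c)) := by ring
    linarith


lemma logcosh_ineq (c u : ℝ) :
    Real.cosh (c + u) ≤ Real.cosh c * Real.exp (Real.tanh c * u + u^2/2) := by
  have h := tangent_ineq c (c + u)
  have hlog : Real.log (Real.cosh (c+u)) ≤ Real.log (Real.cosh c) + Real.tanh c * u + u^2/2 := by
    nlinarith [h]
  calc Real.cosh (c+u) = Real.exp (Real.log (Real.cosh (c+u))) :=
        (Real.exp_log (Real.cosh_pos _)).symm
    _ ≤ Real.exp (Real.log (Real.cosh c) + (Real.tanh c * u + u^2/2)) := by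
        apply Real.exp_le_exp.mpr; linarith
    _ = Real.cosh c * Real.exp (Real.tanh c * u + u^2/2) := by
        rw [Real.exp_add, Real.exp_log (Real.cosh_pos _)]

/-- Hoeffding two-point inequality -/
lemma hoeffding_two_point {a b : ℝ} (ha : 0 ≤ a) (hb : 0 ≤ b) (hab : a + b = 1) (u : ℝ) :
    a * Real.exp (-u) + b * Real.exp u ≤ Real.exp ((b - a) * u + u^2/2) := by
  rcases eq_or_lt_of_le ha with ha0 | hapos
  · -- a = 0, b = 1
    have hb1 : b = 1 := by linarith
    rw [← ha0, hb1]
    simp only [zero_mul, one_mul, zero_add, sub_zero]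
    apply Real.exp_le_exp.mpr; nlinarith [sq_nonneg u]
  rcases eq_or_lt_of_le hb with hb0 | hbpos
  · have ha1 : a = 1 := by linarith
    rw [← hb0, ha1]
    simp only [zero_mul, one_mul, add_zero, zero_sub]
    apply Real.exp_le_exp.mpr; nlinarith [sq_nonneg u]
  · -- main case: a, b > 0
    set c : ℝ := Real.log (b/a) / 2 with hc
    have hp : Real.exp c > 0 := Real.exp_pos c
    set p : ℝ := Real.exp c with hpdef
    have hcc : c + c = Real.log (b/a) := by rw [hc]; ring
    have hp2 : p^2 = b / a := by
      calc p^2 = Real.exp (c + c) := by rw [hpdef, Real.exp_add]; ring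
        _ = b / a := by rw [hcc, Real.exp_log (by positivity)]
    have hba : b = a * p^2 := by rw [hp2]; field_simp
    have hexpc : Real.exp (-c) = 1/p := by rw [Real.exp_neg]; field_simp; exact hpdef
    have hcosh : Real.cosh c = (p + 1/p)/2 := by
      rw [Real.cosh_eq, hexpc]
    have hsinh : Real.sinh c = (p - 1/p)/2 := by
      rw [Real.sinh_eq, hexpc]
    have haeq : a = 1/(1+p^2) := by
      have h1 : a * (1 + p^2) = 1 := by nlinarith
      have hpp : (0:ℝ) < 1 + p^2 := by positivity
      field_simp
      linarith [h1]
    have htanh : Real.tanh c = b - a := by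
      rw [Real.tanh_eq_sinh_div_cosh, hcosh, hsinh, hba, haeq]
      have hpp : (0:ℝ) < 1 + p^2 := by positivity
      field_simp
      ring
    have hcoshcu : Real.cosh (c + u) = Real.cosh c * (a * Real.exp (-u) + b * Real.exp u) := by
      rw [Real.cosh_add, Real.cosh_eq u, Real.sinh_eq u, hcosh, hsinh, hba, haeq]
      have hpp : (0:ℝ) < 1 + p^2 := by positivity
      field_simp
      ring
    have key := logcosh_ineq c u
    rw [hcoshcu, htanh] at key
    have hcpos : 0 < Real.cosh c := Real.cosh_pos c
    exact (mul_le_mul_iff_right₀ hcpos).mp key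


lemma mgf_bound {W : Type*} [MeasurableSpace W] (ν : Measure W) [IsProbabilityMeasure ν]
    (h : W → ℝ) (hm : Measurable h) {M : ℝ} (hM : 0 < M) (hb : ∀ᵐ w ∂ν, |h w| ≤ M) (s : ℝ) :
    ∫ w, Real.exp (s * h w) ∂ν ≤ Real.exp (s * (∫ w, h w ∂ν) + s^2 * M^2 / 2) := by
  have hint : Integrable h ν := by
    refine Integrable.mono' (integrable_const M) hm.aestronglyMeasurable ?_
    filter_upwards [hb] with w hw
    simpa using hw
  set μ0 : ℝ := ∫ w, h w ∂ν with hμ0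
  have habs : |μ0| ≤ M := by
    calc |μ0| ≤ ∫ w, |h w| ∂ν := by
          simpa [Real.norm_eq_abs] using norm_integral_le_integral_norm (f := h) (μ := ν)
      _ ≤ ∫ (_ : W), M ∂ν := integral_mono_ae hint.abs (integrable_const M) hb
      _ = M := by simp
  -- pointwise convexity bound
  have hpt : ∀ᵐ w ∂ν, Real.exp (s * h w) ≤
      (Real.exp (-(s*M)) + Real.exp (s*M))/2 + h w * ((Real.exp (s*M) - Real.exp (-(s*M)))/(2*M)) := by
    filter_upwards [hb] with w hw
    have ha' : 0 ≤ (M - h w)/(2*M) := by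
      have := abs_le.mp hw
      apply div_nonneg (by linarith [this.2]) (by linarith)
    have hb' : 0 ≤ (M + h w)/(2*M) := by
      have := abs_le.mp hw
      apply div_nonneg (by linarith [this.1]) (by linarith)
    have hab' : (M - h w)/(2*M) + (M + h w)/(2*M) = 1 := by field_simp; ring
    have hconv := convexOn_exp.2 (Set.mem_univ (-(s*M))) (Set.mem_univ (s*M)) ha' hb' hab'
    simp only [smul_eq_mul] at hconv
    have hM0 : (2*M) ≠ 0 := by positivity
    have heq : (M - h w)/(2*M) * (-(s*M)) + (M + h w)/(2*M) * (s*M) = s * h w := by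
      rw [div_mul_eq_mul_div, div_mul_eq_mul_div, ← add_div, div_eq_iff hM0]; ring
    rw [heq] at hconv
    calc Real.exp (s * h w) ≤ (M - h w)/(2*M) * Real.exp (-(s*M)) + (M + h w)/(2*M) * Real.exp (s*M) := hconv
      _ = (Real.exp (-(s*M)) + Real.exp (s*M))/2 + h w * ((Real.exp (s*M) - Real.exp (-(s*M)))/(2*M)) := by
          field_simp; ring
  have hintexp : Integrable (fun w => Real.exp (s * h w)) ν := by
    refine Integrable.mono' (integrable_const (Real.exp (|s| * M))) ?_ ?_
    · exact (Real.measurable_exp.comp (measurable_const.mul hm)).aestronglyMeasurable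
    · filter_upwards [hb] with w hw
      rw [Real.norm_eq_abs, Real.abs_exp]
      apply Real.exp_le_exp.mpr
      calc s * h w ≤ |s * h w| := le_abs_self _
        _ = |s| * |h w| := abs_mul s (h w)
        _ ≤ |s| * M := by
            apply mul_le_mul_of_nonneg_left hw (abs_nonneg s)
  have hintrhs : Integrable (fun w =>
      (Real.exp (-(s*M)) + Real.exp (s*M))/2 + h w * ((Real.exp (s*M) - Real.exp (-(s*M)))/(2*M))) ν :=
    (integrable_const _).add (hint.mul_const _)
  have step1 : ∫ w, Real.exp (s * h w) ∂ν ≤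
      (Real.exp (-(s*M)) + Real.exp (s*M))/2 + μ0 * ((Real.exp (s*M) - Real.exp (-(s*M)))/(2*M)) := by
    calc ∫ w, Real.exp (s * h w) ∂ν
        ≤ ∫ w, ((Real.exp (-(s*M)) + Real.exp (s*M))/2 + h w * ((Real.exp (s*M) - Real.exp (-(s*M)))/(2*M))) ∂ν :=
          integral_mono_ae hintexp hintrhs hpt
      _ = (Real.exp (-(s*M)) + Real.exp (s*M))/2 + μ0 * ((Real.exp (s*M) - Real.exp (-(s*M)))/(2*M)) := by
          rw [integral_add (integrable_const _) (hint.mul_const _), integral_const,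
            integral_mul_const]
          simp [hμ0]
  -- apply two-point Hoeffding with a = (M-μ0)/(2M), b = (M+μ0)/(2M), u = s*M
  have key := hoeffding_two_point (a := (M - μ0)/(2*M)) (b := (M + μ0)/(2*M))
    (by have := abs_le.mp habs; apply div_nonneg (by linarith [this.2]) (by linarith))
    (by have := abs_le.mp habs; apply div_nonneg (by linarith [this.1]) (by linarith))
    (by field_simp; ring) (s*M)
  have heq2 : (M - μ0)/(2*M) * Real.exp (-(s*M)) + (M + μ0)/(2*M) * Real.exp (s*M)
      = (Real.exp (-(s*M)) + Real.exp (s*M))/2 + μ0 * ((Real.exp (s*M) - Real.exp (-(s*M)))/(2*M)) := by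
    field_simp; ring
  have heq3 : ((M + μ0)/(2*M) - (M - μ0)/(2*M)) * (s*M) + (s*M)^2/2 = s * μ0 + s^2 * M^2/2 := by
    field_simp; ring
  rw [heq2, heq3] at key
  linarith [step1, key]


lemma integral_pi_pow {W : Type*} [MeasurableSpace W] (ν : Measure W) [IsProbabilityMeasure ν]
    (n : ℕ) (f : W → ℝ) :
    ∫ ω : Fin n → W, ∏ i, f (ω i) ∂(Measure.pi fun _ : Fin n => ν) = (∫ w, f w ∂ν) ^ n := by
  letI : MeasureSpace W := ⟨ν⟩
  simpa using MeasureTheory.integral_fintype_prod_eq_pow (𝕜 := ℝ) (ι := Fin n) (μ := ν) f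

lemma ae_pi_forall {W : Type*} [MeasurableSpace W] (ν : Measure W) [IsProbabilityMeasure ν]
    (n : ℕ) (p : W → Prop) (hp : MeasurableSet {w | p w}) (hae : ∀ᵐ w ∂ν, p w) :
    ∀ᵐ ω ∂(Measure.pi fun _ : Fin n => ν), ∀ i, p (ω i) := by
  have hcompl : ν ({w | p w}ᶜ) = 0 := by
    rw [ae_iff] at hae
    simpa [Set.compl_setOf] using hae
  have h1 : (Measure.pi fun _ : Fin n => ν) (Set.univ.pi fun _ : Fin n => {w | p w}) = 1 := by
    rw [Measure.pi_pi]
    have : ν {w | p w} = 1 := (prob_compl_eq_zero_iff hp).mp hcompl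
    simp [this]
  have h2 : (Measure.pi fun _ : Fin n => ν)
      ((Set.univ.pi fun _ : Fin n => {w | p w})ᶜ) = 0 := by
    rw [measure_compl (MeasurableSet.univ_pi fun _ => hp) (by simp), h1]
    simp
  rw [ae_iff]
  refine measure_mono_null (fun ω hω => ?_) h2
  simp only [Set.mem_setOf_eq] at hω
  simp only [Set.mem_compl_iff, Set.mem_pi, Set.mem_univ, Set.mem_setOf_eq]
  intro hall
  exact hω fun i => hall i trivial

lemma chernoff_one {W : Type*} [MeasurableSpace W] (ν : Measure W) [IsProbabilityMeasure ν]
    {n : ℕ} (hn : 0 < n) (h : W → ℝ) (hm : Measurable h) {M : ℝ} (hM : 0 < M)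
    (hb : ∀ᵐ w ∂ν, |h w| ≤ M) {t : ℝ} (ht : 0 ≤ t) :
    (Measure.pi fun _ : Fin n => ν) {ω | (∫ w, h w ∂ν) + t ≤ (1/(n:ℝ)) * ∑ i, h (ω i)} ≤
      ENNReal.ofReal (Real.exp (-((n:ℝ) * t^2) / (2 * M^2))) := by
  set μpi := Measure.pi fun _ : Fin n => ν with hμpi
  haveI : IsProbabilityMeasure μpi := by rw [hμpi]; infer_instance
  set lam : ℝ := t / M^2 with hlam
  have hlam0 : 0 ≤ lam := by positivity
  set μ0 : ℝ := ∫ w, h w ∂ν with hμ0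
  set F : (Fin n → W) → ℝ := fun ω => Real.exp (lam * ∑ i, h (ω i)) with hF
  have hFmeas : Measurable F := by
    apply Real.measurable_exp.comp
    apply Measurable.const_mul
    exact Finset.measurable_sum _ fun i _ => hm.comp (measurable_pi_apply i)
  have haeb : ∀ᵐ ω ∂μpi, ∀ i, |h (ω i)| ≤ M :=
    ae_pi_forall ν n (fun w => |h w| ≤ M) (by
      exact measurableSet_le (hm.abs) measurable_const) hb
  have hFint : Integrable F μpi := by
    refine Integrable.mono' (integrable_const (Real.exp (lam * (n * M)))) hFmeas.aestronglyMeasurable ?_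
    filter_upwards [haeb] with ω hω
    rw [Real.norm_eq_abs, Real.abs_exp]
    apply Real.exp_le_exp.mpr
    apply mul_le_mul_of_nonneg_left ?_ hlam0
    calc ∑ i, h (ω i) ≤ ∑ i : Fin n, M := Finset.sum_le_sum fun i _ => (abs_le.mp (hω i)).2
      _ = n * M := by simp [mul_comm]
  -- value of ∫ F
  have hFeq : ∀ ω, F ω = ∏ i, Real.exp (lam * h (ω i)) := by
    intro ω
    show Real.exp (lam * ∑ i, h (ω i)) = _
    rw [Finset.mul_sum, Real.exp_sum]
  have hintF : ∫ ω, F ω ∂μpi = (∫ w, Real.exp (lam * h w) ∂ν) ^ n := by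
    simp_rw [hFeq]
    exact integral_pi_pow ν n (fun w => Real.exp (lam * h w))
  have hmgf : (∫ w, Real.exp (lam * h w) ∂ν) ≤ Real.exp (lam * μ0 + lam^2 * M^2/2) :=
    mgf_bound ν h hm hM hb lam
  have hmgf0 : 0 ≤ ∫ w, Real.exp (lam * h w) ∂ν :=
    integral_nonneg fun w => (Real.exp_pos _).le
  have hintF_le : ∫ ω, F ω ∂μpi ≤ Real.exp ((n:ℝ) * (lam * μ0 + lam^2 * M^2/2)) := by
    rw [hintF]
    calc (∫ w, Real.exp (lam * h w) ∂ν) ^ n ≤ (Real.exp (lam * μ0 + lam^2 * M^2/2)) ^ n :=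
          pow_le_pow_left₀ hmgf0 hmgf n
      _ = Real.exp ((n:ℝ) * (lam * μ0 + lam^2 * M^2/2)) := by
          rw [← Real.exp_nat_mul]
  -- Markov
  set c : ℝ := lam * ((n:ℝ) * (μ0 + t)) with hc
  have hsub : {ω : Fin n → W | μ0 + t ≤ (1/(n:ℝ)) * ∑ i, h (ω i)} ⊆ {ω | Real.exp c ≤ F ω} := by
    intro ω hω
    have hω' : μ0 + t ≤ (1/(n:ℝ)) * ∑ i, h (ω i) := hω
    show Real.exp c ≤ Real.exp (lam * ∑ i, h (ω i))
    apply Real.exp_le_exp.mpr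
    show lam * ((n:ℝ) * (μ0 + t)) ≤ _
    apply mul_le_mul_of_nonneg_left ?_ hlam0
    have hn' : (0:ℝ) < n := by exact_mod_cast hn
    calc (n:ℝ) * (μ0 + t) ≤ (n:ℝ) * ((1/(n:ℝ)) * ∑ i, h (ω i)) :=
          mul_le_mul_of_nonneg_left hω' hn'.le
      _ = ∑ i, h (ω i) := by field_simp
  have hmarkov := mul_meas_ge_le_integral_of_nonneg
    (f := F) (μ := μpi) (ae_of_all _ fun ω => (Real.exp_pos _).le) hFint (Real.exp c)
  -- conclude
  have hμA : μpi {ω | μ0 + t ≤ (1/(n:ℝ)) * ∑ i, h (ω i)} ≤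
      ENNReal.ofReal (Real.exp ((n:ℝ) * (lam * μ0 + lam^2 * M^2/2)) / Real.exp c) := by
    have h1 : μpi {ω | μ0 + t ≤ (1/(n:ℝ)) * ∑ i, h (ω i)} ≤ μpi {ω | Real.exp c ≤ F ω} :=
      measure_mono hsub
    have hfin : μpi {ω | Real.exp c ≤ F ω} ≠ ⊤ := measure_ne_top _ _
    have h2 : (μpi {ω | Real.exp c ≤ F ω}).toReal ≤
        Real.exp ((n:ℝ) * (lam * μ0 + lam^2 * M^2/2)) / Real.exp c := by
      rw [le_div_iff₀ (Real.exp_pos c)]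
      calc (μpi {ω | Real.exp c ≤ F ω}).toReal * Real.exp c
          = Real.exp c * (μpi {ω | Real.exp c ≤ F ω}).toReal := by ring
        _ ≤ ∫ ω, F ω ∂μpi := hmarkov
        _ ≤ Real.exp ((n:ℝ) * (lam * μ0 + lam^2 * M^2/2)) := hintF_le
    calc μpi {ω | μ0 + t ≤ (1/(n:ℝ)) * ∑ i, h (ω i)} ≤ μpi {ω | Real.exp c ≤ F ω} := h1
      _ = ENNReal.ofReal ((μpi {ω | Real.exp c ≤ F ω}).toReal) := (ENNReal.ofReal_toReal hfin).symm
      _ ≤ ENNReal.ofReal (Real.exp ((n:ℝ) * (lam * μ0 + lam^2 * M^2/2)) / Real.exp c) :=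
          ENNReal.ofReal_le_ofReal h2
  refine le_trans hμA (le_of_eq ?_)
  congr 1
  rw [← Real.exp_sub]
  congr 1
  rw [hc, hlam]
  field_simp
  ring


lemma chernoff_two {W : Type*} [MeasurableSpace W] (ν : Measure W) [IsProbabilityMeasure ν]
    {n : ℕ} (hn : 0 < n) (h : W → ℝ) (hm : Measurable h) {M : ℝ} (hM : 0 < M)
    (hb : ∀ᵐ w ∂ν, |h w| ≤ M) {t : ℝ} (ht : 0 ≤ t) :
    (Measure.pi fun _ : Fin n => ν) {ω | t < |(∫ w, h w ∂ν) - (1/(n:ℝ)) * ∑ i, h (ω i)|} ≤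
      2 * ENNReal.ofReal (Real.exp (-((n:ℝ) * t^2) / (2 * M^2))) := by
  have hbneg : ∀ᵐ w ∂ν, |(fun w => -h w) w| ≤ M := by
    filter_upwards [hb] with w hw; simpa using hw
  have hA := chernoff_one ν hn h hm hM hb ht
  have hB := chernoff_one ν hn (fun w => -h w) hm.neg hM hbneg ht
  have hintneg : (∫ w, -h w ∂ν) = -(∫ w, h w ∂ν) := integral_neg h
  set μ0 : ℝ := ∫ w, h w ∂ν with hμ0
  have hsub : {ω : Fin n → W | t < |μ0 - (1/(n:ℝ)) * ∑ i, h (ω i)|} ⊆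
      {ω | μ0 + t ≤ (1/(n:ℝ)) * ∑ i, h (ω i)} ∪
      {ω | (∫ w, -h w ∂ν) + t ≤ (1/(n:ℝ)) * ∑ i, (fun w => -h w) (ω i)} := by
    intro ω hω
    simp only [Set.mem_setOf_eq, Set.mem_union] at *
    rw [hintneg]
    rcases lt_or_ge (μ0 - (1/(n:ℝ)) * ∑ i, h (ω i)) 0 with hc | hc
    · left
      rw [abs_of_neg hc] at hω
      linarith
    · right
      rw [abs_of_nonneg hc] at hω
      have : (1/(n:ℝ)) * ∑ i, -h (ω i) = -((1/(n:ℝ)) * ∑ i, h (ω i)) := by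
        rw [Finset.sum_neg_distrib]; ring
      rw [this]
      linarith
  calc (Measure.pi fun _ : Fin n => ν) {ω | t < |μ0 - (1/(n:ℝ)) * ∑ i, h (ω i)|}
      ≤ (Measure.pi fun _ : Fin n => ν) ({ω | μ0 + t ≤ (1/(n:ℝ)) * ∑ i, h (ω i)} ∪
        {ω | (∫ w, -h w ∂ν) + t ≤ (1/(n:ℝ)) * ∑ i, (fun w => -h w) (ω i)}) := measure_mono hsub
    _ ≤ _ + _ := measure_union_le _ _
    _ ≤ ENNReal.ofReal (Real.exp (-((n:ℝ) * t^2) / (2 * M^2)))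
        + ENNReal.ofReal (Real.exp (-((n:ℝ) * t^2) / (2 * M^2))) := add_le_add hA hB
    _ = 2 * ENNReal.ofReal (Real.exp (-((n:ℝ) * t^2) / (2 * M^2))) := (two_mul _).symm


-- arithmetic lemma 1
example {d n : ℕ} (hn : 0 < n) (hd : 0 < d) {δ : ℝ} (hδ0 : 0 < δ) (hδ1 : δ < 1) :
    True := trivial

lemma arith1 {d n : ℕ} (hn : 0 < n) {δ B r : ℝ} (hδ0 : 0 < δ) (hδ2 : δ ≤ 2) (hB : 0 < B) (hr : 0 < r)
    (hd : 0 < d) :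
    2 * Real.exp (-((n:ℝ) * (B*r*d * (Real.sqrt (d * Real.log (n+1) / (2*n))
        + Real.sqrt (Real.log (2/δ) / (2*n))))^2) / (2 * (B*r*d/2)^2))
      ≤ δ / ((n:ℝ)+1)^d := by
  set L := Real.log ((n:ℝ)+1) with hL
  set S := Real.sqrt ((d:ℝ) * L / (2*n)) + Real.sqrt (Real.log (2/δ) / (2*n)) with hS
  have hn' : (0:ℝ) < n := by exact_mod_cast hn
  have hd' : (1:ℝ) ≤ d := by exact_mod_cast hd
  have hM : (0:ℝ) < B*r*d/2 := by positivity
  have hL0 : 0 ≤ L := by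
    rw [hL]; apply Real.log_nonneg; linarith
  have hlog2δ : 0 ≤ Real.log (2/δ) := by
    apply Real.log_nonneg
    rw [le_div_iff₀ hδ0]; linarith [hδ2]
  -- S^2 ≥ d*L/(2n) + log(2/δ)/(2n)
  have hS2 : (d:ℝ) * L / (2*n) + Real.log (2/δ) / (2*n) ≤ S^2 := by
    rw [hS]
    have h1 := Real.sq_sqrt (by positivity : (0:ℝ) ≤ (d:ℝ) * L / (2*n))
    have h2 := Real.sq_sqrt (by positivity : (0:ℝ) ≤ Real.log (2/δ) / (2*n))
    nlinarith [Real.sqrt_nonneg ((d:ℝ) * L / (2*n)), Real.sqrt_nonneg (Real.log (2/δ) / (2*n)),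
      mul_nonneg (Real.sqrt_nonneg ((d:ℝ) * L / (2*n))) (Real.sqrt_nonneg (Real.log (2/δ) / (2*n)))]
  -- exponent
  have hexp : (d:ℝ) * L + Real.log (2/δ) ≤ (n:ℝ) * (B*r*d * S)^2 / (2 * (B*r*d/2)^2) := by
    have heq : (n:ℝ) * (B*r*d * S)^2 / (2 * (B*r*d/2)^2) = 2 * n * S^2 := by
      field_simp
      try ring
    rw [heq]
    have := mul_le_mul_of_nonneg_left hS2 (by positivity : (0:ℝ) ≤ 2*n)
    calc (d:ℝ) * L + Real.log (2/δ)
        = 2*n * ((d:ℝ) * L / (2*n) + Real.log (2/δ) / (2*n)) := by field_simp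
      _ ≤ 2*n * S^2 := this
  have hmono : Real.exp (-((n:ℝ) * (B*r*d*S)^2) / (2 * (B*r*d/2)^2))
      ≤ Real.exp (-((d:ℝ) * L + Real.log (2/δ))) := by
    apply Real.exp_le_exp.mpr
    rw [neg_div]
    linarith
  have hval : Real.exp (-((d:ℝ) * L + Real.log (2/δ))) = (δ/2) / ((n:ℝ)+1)^d := by
    rw [neg_add, Real.exp_add]
    have e1 : Real.exp (-((d:ℝ) * L)) = 1 / ((n:ℝ)+1)^d := by
      rw [Real.exp_neg, hL, Real.exp_nat_mul, Real.exp_log (by linarith)]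
      rw [one_div]
    have e2 : Real.exp (-Real.log (2/δ)) = δ/2 := by
      rw [Real.exp_neg, Real.exp_log (by positivity)]
      rw [inv_div]
    rw [e1, e2]
    ring
  calc 2 * Real.exp (-((n:ℝ) * (B*r*d*S)^2) / (2 * (B*r*d/2)^2))
      ≤ 2 * ((δ/2) / ((n:ℝ)+1)^d) := by
        rw [← hval]
        linarith [hmono]
    _ = δ / ((n:ℝ)+1)^d := by ring


lemma half_le_log_two : (1/2 : ℝ) ≤ Real.log 2 := by
  rw [Real.le_log_iff_exp_le (by norm_num : (0:ℝ) < 2)]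
  have h1 : Real.exp (1/2 : ℝ) ^ 2 = Real.exp 1 := by
    rw [sq, ← Real.exp_add]; norm_num
  nlinarith [Real.exp_pos (1/2 : ℝ), Real.exp_one_lt_d9]

lemma arith2 {d n : ℕ} (hn : 0 < n) (hd : 0 < d) :
    Real.sqrt ((d:ℝ) * Real.log ((n:ℝ)+1) / (2*n)) + 1/((n:ℝ)+1)
      ≤ 2 * Real.sqrt (2 * (d:ℝ) * Real.log ((n:ℝ)+1) / n) := by
  set L := Real.log ((n:ℝ)+1) with hL
  have hn' : (0:ℝ) < n := by exact_mod_cast hn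
  have hd' : (1:ℝ) ≤ d := by exact_mod_cast hd
  have hn1 : (1:ℝ) ≤ n := by exact_mod_cast hn
  have hL2 : (1/2 : ℝ) ≤ L := by
    calc (1/2 : ℝ) ≤ Real.log 2 := half_le_log_two
      _ ≤ L := by rw [hL]; apply Real.log_le_log (by norm_num); linarith
  have hA0 : (0:ℝ) ≤ 2 * (d:ℝ) * L / n := by positivity
  -- sqrt(dL/(2n)) = sqrt(2dL/n)/2
  have hhalf : Real.sqrt ((d:ℝ) * L / (2*n)) = Real.sqrt (2 * (d:ℝ) * L / n) / 2 := by
    rw [show (d:ℝ) * L / (2*n) = (1/2)^2 * (2 * (d:ℝ) * L / n) by field_simp]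
    rw [Real.sqrt_mul (by positivity), Real.sqrt_sq (by norm_num : (0:ℝ) ≤ 1/2)]
    ring
  -- 1/(n+1) ≤ sqrt(2dL/n)
  have hsq : (1/((n:ℝ)+1))^2 ≤ 2 * (d:ℝ) * L / n := by
    rw [div_pow, one_pow, div_le_div_iff₀ (by positivity) hn']
    have h2dL : (1:ℝ) ≤ 2*(d:ℝ)*L := by nlinarith
    have hsq1 : (n:ℝ) ≤ ((n:ℝ)+1)^2 := by nlinarith
    have h3 : ((n:ℝ)+1)^2 ≤ 2*(d:ℝ)*L*(((n:ℝ)+1)^2) := by nlinarith [sq_nonneg ((n:ℝ)+1)]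
    linarith
  have hs : 1/((n:ℝ)+1) ≤ Real.sqrt (2 * (d:ℝ) * L / n) := by
    have := Real.sqrt_le_sqrt hsq
    rwa [Real.sqrt_sq (by positivity : (0:ℝ) ≤ 1/((n:ℝ)+1))] at this
  have hs0 : 0 ≤ Real.sqrt (2 * (d:ℝ) * L / n) := Real.sqrt_nonneg _
  rw [hhalf]
  linarith


lemma net_close {n : ℕ} {r y : ℝ} (hr : 0 < r) (hy : |y| ≤ r) :
    |y - (r*(2*((min n ⌊(y + r)*((n:ℝ)+1)/(2*r)⌋₊ : ℕ) : ℝ)+1)/((n:ℝ)+1) - r)| ≤ r/((n:ℝ)+1) := by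
  have hy' := abs_le.mp hy
  set u : ℝ := (y + r)*((n:ℝ)+1)/(2*r) with hu
  set j : ℕ := min n ⌊u⌋₊ with hj
  have hn1 : (0:ℝ) < (n:ℝ)+1 := by positivity
  have hu0 : 0 ≤ u := by
    rw [hu]; apply div_nonneg (by nlinarith) (by linarith)
  have huN : u ≤ (n:ℝ)+1 := by
    rw [hu, div_le_iff₀ (by linarith : (0:ℝ) < 2*r)]
    nlinarith
  have hju : (j:ℝ) ≤ u := by
    calc (j:ℝ) ≤ (⌊u⌋₊ : ℝ) := by exact_mod_cast Nat.cast_le.mpr (min_le_right n ⌊u⌋₊)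
      _ ≤ u := Nat.floor_le hu0
  have huj : u ≤ (j:ℝ)+1 := by
    by_cases hfl : ⌊u⌋₊ ≤ n
    · have : j = ⌊u⌋₊ := min_eq_right hfl
      rw [this]
      exact (Nat.lt_floor_add_one u).le
    · have hjn : j = n := min_eq_left (by omega)
      rw [hjn]
      exact huN
  have h1 : 2*r*(j:ℝ) ≤ (y+r)*((n:ℝ)+1) := by
    have := mul_le_mul_of_nonneg_right hju (by linarith : (0:ℝ) ≤ 2*r)
    rw [hu, div_mul_cancel₀] at this
    · linarith
    · intro h0; nlinarith
  have h2 : (y+r)*((n:ℝ)+1) ≤ 2*r*((j:ℝ)+1) := by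
    have := mul_le_mul_of_nonneg_right huj (by linarith : (0:ℝ) ≤ 2*r)
    rw [hu, div_mul_cancel₀] at this
    · linarith
    · intro h0; nlinarith
  have hexpand : y - (r*(2*(j:ℝ)+1)/((n:ℝ)+1) - r) = ((y+r)*((n:ℝ)+1) - r*(2*(j:ℝ)+1))/((n:ℝ)+1) := by
    field_simp
    ring
  rw [hexpand, abs_div, abs_of_pos hn1]
  gcongr
  rw [abs_le]
  constructor <;> nlinarith [h1, h2]


/-- Monte-Carlo uniform approximation bound (Lemma): with probability at least
`1 - δ` over `n` i.i.d. samples `w₁,…,w_n` uniform on `[-1/2,1/2]^d`, the empirical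
average `(1/n) Σ g(wᵢ)σ(wᵢ·x)` approximates `f(x) = ∫ g(w)σ(w·x) dw` uniformly over
`x ∈ [-r,r]^d` with the stated rate. -/
theorem random_relu_uniform_approximation {d n : ℕ} (hn : 0 < n)
    (B r δ : ℝ) (hr : 0 ≤ r) (hδ0 : 0 < δ) (hδ1 : δ < 1)
    (g : (Fin d → ℝ) → ℝ) (hgm : Measurable g) (hgB : ∀ w, |g w| ≤ B) :
    1 - ENNReal.ofReal δ ≤
      (Measure.pi fun _ : Fin n =>
          (volume : Measure (Fin d → ℝ)).restrict
            (Set.univ.pi fun _ : Fin d => Set.Icc (-(1 / 2) : ℝ) (1 / 2)))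
        {ω : Fin n → Fin d → ℝ |
          ∀ x : Fin d → ℝ, (∀ i, |x i| ≤ r) →
            |(∫ w in Set.univ.pi fun _ : Fin d => Set.Icc (-(1 / 2) : ℝ) (1 / 2),
                g w * max (∑ i, w i * x i) 0)
              - (1 / n) * ∑ i, g (ω i) * max (∑ j, ω i j * x j) 0|
            ≤ B * r * d *
                (2 * Real.sqrt (2 * d * Real.log (n + 1) / n)
                  + Real.sqrt (Real.log (2 / δ) / (2 * n)))} := by
  classical
  set cube : Set (Fin d → ℝ) := Set.univ.pi fun _ : Fin d => Set.Icc (-(1 / 2) : ℝ) (1 / 2)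
    with hcube
  have hcube_meas : MeasurableSet cube := MeasurableSet.univ_pi fun _ => measurableSet_Icc
  have hcube_vol : volume cube = 1 := by
    rw [hcube, volume_pi_pi]
    simp [Real.volume_Icc]
    norm_num
  set ν : Measure (Fin d → ℝ) := volume.restrict cube with hν
  haveI : IsProbabilityMeasure ν := ⟨by rw [hν, Measure.restrict_apply_univ]; exact hcube_vol⟩
  set μpi := Measure.pi fun _ : Fin n => ν with hμpi
  haveI : IsProbabilityMeasure μpi := by rw [hμpi]; infer_instance
  have hwj : ∀ w ∈ cube, ∀ j, |w j| ≤ 1/2 := by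
    intro w hw j
    rw [hcube] at hw
    have := hw j (Set.mem_univ j)
    rw [abs_le]
    exact ⟨this.1, this.2⟩
  -- the per-point function
  set hfun : (Fin d → ℝ) → (Fin d → ℝ) → ℝ :=
    fun y w => g w * max (∑ j, w j * y j) 0 with hhfun
  have hmeas : ∀ y, Measurable (hfun y) := by
    intro y
    apply hgm.mul
    exact (by fun_prop : Measurable fun w : Fin d → ℝ => ∑ j, w j * y j).max
      measurable_const
  have habsmax : ∀ s : ℝ, |max s 0| ≤ |s| := by
    intro s
    rw [abs_of_nonneg (le_max_right s 0)]
    exact max_le (le_abs_self s) (abs_nonneg s)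
  have hBnn : 0 ≤ B := le_trans (abs_nonneg _) (hgB (fun _ => 0))
  have hsumb : ∀ (y : Fin d → ℝ) (C : ℝ), 0 ≤ C → (∀ i, |y i| ≤ C) →
      ∀ w ∈ cube, |∑ j, w j * y j| ≤ d * C / 2 := by
    intro y C hC hyC w hw
    calc |∑ j, w j * y j| ≤ ∑ j, |w j * y j| := Finset.abs_sum_le_sum_abs _ _
      _ ≤ ∑ _j : Fin d, (1/2) * C := by
          apply Finset.sum_le_sum
          intro j _
          rw [abs_mul]
          exact mul_le_mul (hwj w hw j) (hyC j) (abs_nonneg _) (by norm_num)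
      _ = d * C / 2 := by
          rw [Finset.sum_const, Finset.card_univ, Fintype.card_fin, nsmul_eq_mul]
          ring
  have hbound : ∀ (y : Fin d → ℝ), (∀ i, |y i| ≤ r) →
      ∀ w ∈ cube, |hfun y w| ≤ B * r * d / 2 := by
    intro y hy w hw
    rw [hhfun]
    simp only
    rw [abs_mul]
    calc |g w| * |max (∑ j, w j * y j) 0| ≤ B * (d * r / 2) := by
          apply mul_le_mul (hgB w) ((habsmax _).trans (hsumb y r hr hy w hw)) (abs_nonneg _) hBnn
      _ = B * r * d / 2 := by ring
  have hlip : ∀ (y z : Fin d → ℝ) (e : ℝ), 0 ≤ e → (∀ i, |y i - z i| ≤ e) →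
      ∀ w ∈ cube, |hfun y w - hfun z w| ≤ B * (d * e / 2) := by
    intro y z e he hyz w hw
    have h1 : hfun y w - hfun z w = g w * (max (∑ j, w j * y j) 0 - max (∑ j, w j * z j) 0) := by
      rw [hhfun]; ring
    rw [h1, abs_mul]
    have h2 : |max (∑ j, w j * y j) 0 - max (∑ j, w j * z j) 0| ≤ d * e / 2 := by
      calc |max (∑ j, w j * y j) 0 - max (∑ j, w j * z j) 0|
          ≤ |(∑ j, w j * y j) - ∑ j, w j * z j| := abs_max_sub_max_le_abs _ _ _
        _ = |∑ j, w j * (y j - z j)| := by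
            congr 1
            rw [← Finset.sum_sub_distrib]
            apply Finset.sum_congr rfl
            intro j _
            ring
        _ ≤ d * e / 2 := by
            exact hsumb (fun i => y i - z i) e he hyz w hw
    exact mul_le_mul (hgB w) h2 (abs_nonneg _) hBnn
  have hint : ∀ (y : Fin d → ℝ), (∀ i, |y i| ≤ r) → Integrable (hfun y) ν := by
    intro y hy
    refine Integrable.mono' (integrable_const (B * r * d / 2)) (hmeas y).aestronglyMeasurable ?_
    apply ae_restrict_of_forall_mem hcube_meas
    intro w hw
    rw [Real.norm_eq_abs]
    exact hbound y hy w hw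
  -- degenerate cases
  rcases Nat.eq_zero_or_pos d with hd0 | hd
  · subst hd0
    have hset : {ω : Fin n → Fin 0 → ℝ |
        ∀ x : Fin 0 → ℝ, (∀ i, |x i| ≤ r) →
          |(∫ w in cube, g w * max (∑ i, w i * x i) 0)
            - (1 / (n:ℝ)) * ∑ i, g (ω i) * max (∑ j, ω i j * x j) 0|
          ≤ B * r * ((0:ℕ):ℝ) * (2 * Real.sqrt (2 * ((0:ℕ):ℝ) * Real.log (n + 1) / n)
              + Real.sqrt (Real.log (2 / δ) / (2 * n)))} = Set.univ := by
      apply Set.eq_univ_of_forall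
      intro ω x _
      simp
    rw [hset, measure_univ]
    exact tsub_le_self
  rcases eq_or_lt_of_le hBnn with hB0 | hB
  · -- B = 0
    have hg0 : ∀ w, g w = 0 := by
      intro w
      have h := hgB w
      rw [← hB0] at h
      exact abs_eq_zero.mp (le_antisymm h (abs_nonneg _))
    have hset : {ω : Fin n → Fin d → ℝ |
        ∀ x : Fin d → ℝ, (∀ i, |x i| ≤ r) →
          |(∫ w in cube, g w * max (∑ i, w i * x i) 0)
            - (1 / (n:ℝ)) * ∑ i, g (ω i) * max (∑ j, ω i j * x j) 0|
          ≤ B * r * d * (2 * Real.sqrt (2 * d * Real.log (n + 1) / n)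
              + Real.sqrt (Real.log (2 / δ) / (2 * n)))} = Set.univ := by
      apply Set.eq_univ_of_forall
      intro ω x _
      simp [hg0, ← hB0]
    rw [hset, measure_univ]
    exact tsub_le_self
  rcases eq_or_lt_of_le hr with hr0 | hrpos
  · -- r = 0
    have hset : {ω : Fin n → Fin d → ℝ |
        ∀ x : Fin d → ℝ, (∀ i, |x i| ≤ r) →
          |(∫ w in cube, g w * max (∑ i, w i * x i) 0)
            - (1 / (n:ℝ)) * ∑ i, g (ω i) * max (∑ j, ω i j * x j) 0|
          ≤ B * r * d * (2 * Real.sqrt (2 * d * Real.log (n + 1) / n)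
              + Real.sqrt (Real.log (2 / δ) / (2 * n)))} = Set.univ := by
      apply Set.eq_univ_of_forall
      intro ω x hx
      have hx0 : ∀ i, x i = 0 := by
        intro i
        have h := hx i
        rw [← hr0] at h
        exact abs_eq_zero.mp (le_antisymm h (abs_nonneg _))
      simp [hx0, ← hr0]
    rw [hset, measure_univ]
    exact tsub_le_self
  -- MAIN CASE
  set L := Real.log ((n:ℝ)+1) with hL
  set t0 : ℝ := B*r*d * (Real.sqrt (d * L / (2*n)) + Real.sqrt (Real.log (2/δ) / (2*n)))
    with ht0def
  have ht0 : 0 ≤ t0 := by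
    rw [ht0def]
    positivity
  have hM : (0:ℝ) < B * r * d / 2 := by
    have hd' : (0:ℝ) < d := by exact_mod_cast hd
    positivity
  -- the net
  set net : (Fin d → Fin (n+1)) → (Fin d → ℝ) :=
    fun k i => r*(2*((k i : ℕ) : ℝ)+1)/((n:ℝ)+1) - r with hnet
  have hnet_in : ∀ k i, |net k i| ≤ r := by
    intro k i
    have hj : ((k i : ℕ) : ℝ) ≤ n := by exact_mod_cast Nat.lt_succ_iff.mp (k i).isLt
    have hj0 : (0:ℝ) ≤ ((k i : ℕ) : ℝ) := by positivity
    have hn1 : (0:ℝ) < (n:ℝ)+1 := by positivity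
    rw [hnet, abs_le]
    constructor
    · have hnn : (0:ℝ) ≤ r*(2*((k i : ℕ) : ℝ)+1)/((n:ℝ)+1) := by positivity
      simp only
      linarith
    · simp only
      rw [sub_le_iff_le_add, div_le_iff₀ hn1]
      nlinarith
  -- bad events
  set Abad : (Fin d → Fin (n+1)) → Set (Fin n → Fin d → ℝ) :=
    fun k => {ω | t0 < |(∫ w, hfun (net k) w ∂ν) - (1/(n:ℝ)) * ∑ i, hfun (net k) (ω i)|}
    with hAbad
  have hae_k : ∀ k, ∀ᵐ w ∂ν, |hfun (net k) w| ≤ B * r * d / 2 := by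
    intro k
    apply ae_restrict_of_forall_mem hcube_meas
    exact hbound (net k) (hnet_in k)
  have hδ2 : δ ≤ 2 := by linarith
  have hbadk : ∀ k, μpi (Abad k) ≤ ENNReal.ofReal (δ / ((n:ℝ)+1)^d) := by
    intro k
    calc μpi (Abad k) ≤ 2 * ENNReal.ofReal (Real.exp (-((n:ℝ) * t0^2) / (2 * (B*r*d/2)^2))) :=
          chernoff_two ν hn (hfun (net k)) (hmeas _) hM (hae_k k) ht0
      _ = ENNReal.ofReal (2 * Real.exp (-((n:ℝ) * t0^2) / (2 * (B*r*d/2)^2))) := by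
          rw [ENNReal.ofReal_mul (by norm_num : (0:ℝ) ≤ 2)]
          congr 1
          simp
      _ ≤ ENNReal.ofReal (δ / ((n:ℝ)+1)^d) := by
          apply ENNReal.ofReal_le_ofReal
          have harith1 := arith1 (d := d) (n := n) hn hδ0 hδ2 hB hrpos hd
          rw [ht0def, hL]
          exact harith1
  -- cube event
  set Call : Set (Fin n → Fin d → ℝ) := Set.univ.pi fun _ : Fin n => cube with hCall
  have hCall_full : μpi Call = 1 := by
    rw [hμpi, hCall, Measure.pi_pi]
    have hν1 : ν cube = 1 := by
      rw [hν, Measure.restrict_apply hcube_meas, Set.inter_self]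
      exact hcube_vol
    simp [hν1]
  have hCall_compl : μpi Callᶜ = 0 := by
    rw [measure_compl (MeasurableSet.univ_pi fun _ => hcube_meas) (by simp), hCall_full]
    simp
  -- good event
  set Good : Set (Fin n → Fin d → ℝ) := Call ∩ (⋂ k, (Abad k)ᶜ) with hGood
  have hGoodc : μpi Goodᶜ ≤ ENNReal.ofReal δ := by
    have h1 : Goodᶜ = Callᶜ ∪ ⋃ k, Abad k := by
      rw [hGood, Set.compl_inter, Set.compl_iInter]
      simp
    rw [h1]
    calc μpi (Callᶜ ∪ ⋃ k, Abad k) ≤ μpi Callᶜ + μpi (⋃ k, Abad k) := measure_union_le _ _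
      _ ≤ 0 + ∑' k, μpi (Abad k) := by
          rw [hCall_compl]
          exact add_le_add le_rfl (measure_iUnion_le _)
      _ ≤ ∑' (_k : Fin d → Fin (n+1)), ENNReal.ofReal (δ / ((n:ℝ)+1)^d) := by
          rw [zero_add]
          exact ENNReal.tsum_le_tsum hbadk
      _ = (Fintype.card (Fin d → Fin (n+1))) * ENNReal.ofReal (δ / ((n:ℝ)+1)^d) := by
          rw [tsum_fintype]
          rw [Finset.sum_const, Finset.card_univ, nsmul_eq_mul]
      _ ≤ ENNReal.ofReal δ := by
          rw [Fintype.card_fun, Fintype.card_fin, Fintype.card_fin]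
          rw [← ENNReal.ofReal_natCast, ← ENNReal.ofReal_mul (by positivity)]
          apply ENNReal.ofReal_le_ofReal
          have hpos : (0:ℝ) < ((n:ℝ)+1)^d := by positivity
          have hcast : (((n+1)^d : ℕ) : ℝ) = ((n:ℝ)+1)^d := by push_cast; ring
          rw [hcast, mul_div_cancel₀]
          exact ne_of_gt hpos
  have hGood_lb : 1 - ENNReal.ofReal δ ≤ μpi Good := by
    have h1 : (1:ENNReal) ≤ μpi Good + μpi Goodᶜ := by
      rw [← measure_univ (μ := μpi), ← Set.union_compl_self Good]
      exact measure_union_le _ _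
    have h2 : (1:ENNReal) ≤ μpi Good + ENNReal.ofReal δ :=
      le_trans h1 (add_le_add le_rfl hGoodc)
    exact tsub_le_iff_right.mpr h2
  refine le_trans hGood_lb (measure_mono ?_)
  -- Good ⊆ target
  intro ω hω
  obtain ⟨hωcube, hωgood⟩ := hω
  have hωc : ∀ i, ω i ∈ cube := fun i => hωcube i (Set.mem_univ i)
  have hωk : ∀ k, |(∫ w, hfun (net k) w ∂ν) - (1/(n:ℝ)) * ∑ i, hfun (net k) (ω i)| ≤ t0 := by
    intro k
    have hk1 := Set.mem_iInter.mp hωgood k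
    exact not_lt.mp hk1
  intro x hx
  -- choose net point
  set k : Fin d → Fin (n+1) :=
    fun i => ⟨min n ⌊(x i + r)*((n:ℝ)+1)/(2*r)⌋₊, Nat.lt_succ_of_le (min_le_left _ _)⟩ with hk
  have hclose : ∀ i, |x i - net k i| ≤ r/((n:ℝ)+1) := by
    intro i
    exact net_close hrpos (hx i)
  have hε : (0:ℝ) ≤ r/((n:ℝ)+1) := by positivity
  -- Lipschitz bounds
  have hIlip : |(∫ w, hfun x w ∂ν) - (∫ w, hfun (net k) w ∂ν)| ≤ B * (d * (r/((n:ℝ)+1)) / 2) := by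
    rw [← integral_sub (hint x hx) (hint (net k) (hnet_in k))]
    have hb : ∀ᵐ w ∂ν, ‖hfun x w - hfun (net k) w‖ ≤ B * (d * (r/((n:ℝ)+1)) / 2) := by
      apply ae_restrict_of_forall_mem hcube_meas
      intro w hw
      rw [Real.norm_eq_abs]
      exact hlip x (net k) (r/((n:ℝ)+1)) hε hclose w hw
    have hni := norm_integral_le_of_norm_le_const (μ := ν) hb
    rw [Real.norm_eq_abs] at hni
    simpa using hni
  have hSlip : |(1/(n:ℝ)) * ∑ i, hfun x (ω i) - (1/(n:ℝ)) * ∑ i, hfun (net k) (ω i)|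
      ≤ B * (d * (r/((n:ℝ)+1)) / 2) := by
    have hn' : (0:ℝ) < n := by exact_mod_cast hn
    have h1 : (1/(n:ℝ)) * ∑ i, hfun x (ω i) - (1/(n:ℝ)) * ∑ i, hfun (net k) (ω i)
        = (1/(n:ℝ)) * ∑ i, (hfun x (ω i) - hfun (net k) (ω i)) := by
      rw [Finset.sum_sub_distrib]
      ring
    rw [h1, abs_mul, abs_of_pos (by positivity : (0:ℝ) < 1/(n:ℝ))]
    calc (1/(n:ℝ)) * |∑ i, (hfun x (ω i) - hfun (net k) (ω i))|
        ≤ (1/(n:ℝ)) * ∑ _i : Fin n, B * (d * (r/((n:ℝ)+1)) / 2) := by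
          apply mul_le_mul_of_nonneg_left ?_ (by positivity : (0:ℝ) ≤ 1/(n:ℝ))
          calc |∑ i, (hfun x (ω i) - hfun (net k) (ω i))|
              ≤ ∑ i, |hfun x (ω i) - hfun (net k) (ω i)| := Finset.abs_sum_le_sum_abs _ _
            _ ≤ ∑ _i : Fin n, B * (d * (r/((n:ℝ)+1)) / 2) := by
                apply Finset.sum_le_sum
                intro i _
                exact hlip x (net k) (r/((n:ℝ)+1)) hε hclose (ω i) (hωc i)
      _ = B * (d * (r/((n:ℝ)+1)) / 2) := by
          rw [Finset.sum_const, Finset.card_univ, Fintype.card_fin, nsmul_eq_mul]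
          field_simp
  -- combine
  show |(∫ w in cube, g w * max (∑ i, w i * x i) 0)
      - (1 / (n:ℝ)) * ∑ i, g (ω i) * max (∑ j, ω i j * x j) 0| ≤ _
  have hid1 : (∫ w in cube, g w * max (∑ i, w i * x i) 0) = ∫ w, hfun x w ∂ν := rfl
  have hid2 : ∀ i, g (ω i) * max (∑ j, ω i j * x j) 0 = hfun x (ω i) := fun i => rfl
  rw [hid1]
  simp_rw [hid2]
  have htri : |(∫ w, hfun x w ∂ν) - (1/(n:ℝ)) * ∑ i, hfun x (ω i)|
      ≤ t0 + 2 * (B * (d * (r/((n:ℝ)+1)) / 2)) := by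
    have e1 := hIlip
    have e2 := hωk k
    have e3' : |(1/(n:ℝ)) * ∑ i, hfun (net k) (ω i) - (1/(n:ℝ)) * ∑ i, hfun x (ω i)|
        ≤ B * (d * (r/((n:ℝ)+1)) / 2) := by
      rw [abs_sub_comm]
      exact hSlip
    have habc : (∫ w, hfun x w ∂ν) - (1/(n:ℝ)) * ∑ i, hfun x (ω i)
        = ((∫ w, hfun x w ∂ν) - (∫ w, hfun (net k) w ∂ν))
          + ((∫ w, hfun (net k) w ∂ν) - (1/(n:ℝ)) * ∑ i, hfun (net k) (ω i))
          + ((1/(n:ℝ)) * ∑ i, hfun (net k) (ω i) - (1/(n:ℝ)) * ∑ i, hfun x (ω i)) := by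
      ring
    rw [habc]
    have habs3 : ∀ p q s : ℝ, |p + q + s| ≤ |p| + |q| + |s| := fun p q s =>
      (abs_add_le _ _).trans (add_le_add (abs_add_le p q) le_rfl)
    calc |((∫ w, hfun x w ∂ν) - (∫ w, hfun (net k) w ∂ν))
          + ((∫ w, hfun (net k) w ∂ν) - (1/(n:ℝ)) * ∑ i, hfun (net k) (ω i))
          + ((1/(n:ℝ)) * ∑ i, hfun (net k) (ω i) - (1/(n:ℝ)) * ∑ i, hfun x (ω i))|
        ≤ |(∫ w, hfun x w ∂ν) - (∫ w, hfun (net k) w ∂ν)|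
          + |(∫ w, hfun (net k) w ∂ν) - (1/(n:ℝ)) * ∑ i, hfun (net k) (ω i)|
          + |(1/(n:ℝ)) * ∑ i, hfun (net k) (ω i) - (1/(n:ℝ)) * ∑ i, hfun x (ω i)| :=
          habs3 _ _ _
      _ ≤ B * (d * (r/((n:ℝ)+1)) / 2) + t0 + B * (d * (r/((n:ℝ)+1)) / 2) :=
          add_le_add (add_le_add e1 e2) e3'
      _ = t0 + 2 * (B * (d * (r/((n:ℝ)+1)) / 2)) := by ring
  refine le_trans htri ?_
  -- final arithmetic
  have harith := arith2 (n := n) hn hd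
  have hfinal : t0 + 2 * (B * (d * (r/((n:ℝ)+1)) / 2))
      ≤ B * r * d * (2 * Real.sqrt (2 * d * L / n) + Real.sqrt (Real.log (2/δ) / (2*n))) := by
    rw [ht0def]
    have hBrd : (0:ℝ) ≤ B * r * d := by positivity
    have key : Real.sqrt ((d:ℝ) * L / (2*n)) + Real.sqrt (Real.log (2/δ) / (2*n)) + 1/((n:ℝ)+1)
        ≤ 2 * Real.sqrt (2 * d * L / n) + Real.sqrt (Real.log (2/δ) / (2*n)) := by
      linarith
    calc B*r*d * (Real.sqrt (d * L / (2*n)) + Real.sqrt (Real.log (2/δ) / (2*n)))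
          + 2 * (B * (d * (r/((n:ℝ)+1)) / 2))
        = B*r*d * (Real.sqrt (d * L / (2*n)) + Real.sqrt (Real.log (2/δ) / (2*n)) + 1/((n:ℝ)+1)) := by
          ring
      _ ≤ B * r * d * (2 * Real.sqrt (2 * d * L / n) + Real.sqrt (Real.log (2/δ) / (2*n))) :=
          mul_le_mul_of_nonneg_left key hBrd
  exact le_trans hfinal (le_of_eq (by rw [hL]))


end AuxLemmas
end
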